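/- arXiv:math/0506068 — 6 statements merged into one kernel-verified Lean document; each statement's English description precedes it below -/
import Mathlib

section
/- Let G be a connected linear algebraic group defined over a finite field k with Frobenius endomorphism F. Suppose c ∈ G has minimum field degree r (i.e., r is the smallest positive integer with c^{F^r} = c), and let s be the order of the element c^{F^{r-1}} ⋯ c^F c. If c = a^{-F} a for some a ∈ G, then the minimum field degree of a is exactly rs. -/
/-- Minimum field degree of a Lang-theorem solution: if `c` has minimum field
degree `r` and `s` is the order of `c^{F^{r-1}} ⋯ c^F c`, and `c = a^{-F} a`,
then the minimum field degree of `a` is exactly `r * s`. -/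
theorem stmt0 {G : Type*} [Group G] (F : G →* G) (c a : G) (r s : ℕ)
    (hr : 0 < r) (hcr : (⇑F)^[r] c = c)
    (hrmin : ∀ m, 0 < m → m < r → (⇑F)^[m] c ≠ c)
    (hs : orderOf (((List.range r).reverse.map (fun i => (⇑F)^[i] c)).prod) = s)
    (hca : c = (F a)⁻¹ * a) :
    (⇑F)^[r * s] a = a ∧ ∀ m, 0 < m → m < r * s → (⇑F)^[m] a ≠ a := by
  set P : ℕ → G := fun m => ((List.range m).reverse.map (fun i => (⇑F)^[i] c)).prod with hP
  -- iterates are multiplicative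
  have hmul : ∀ n (x y : G), (⇑F)^[n] (x * y) = (⇑F)^[n] x * (⇑F)^[n] y := by
    intro n
    induction n with
    | zero => simp
    | succ n ih =>
      intro x y
      simp [Function.iterate_succ_apply', ih, map_mul]
  have hinv : ∀ n (x : G), (⇑F)^[n] x⁻¹ = ((⇑F)^[n] x)⁻¹ := by
    intro n
    induction n with
    | zero => simp
    | succ n ih =>
      intro x
      simp [Function.iterate_succ_apply', ih, map_inv]
  have hone : ∀ n, (⇑F)^[n] (1 : G) = 1 := by
    intro n
    induction n with
    | zero => simp
    | succ n ih => simp [Function.iterate_succ_apply', ih, map_one]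
  have hpow : ∀ n (x : G) (k : ℕ), (⇑F)^[n] (x ^ k) = ((⇑F)^[n] x) ^ k := by
    intro n x k
    induction k with
    | zero => simp [hone]
    | succ k ih => simp [pow_succ, hmul, ih]
  have hFn_prod : ∀ (n : ℕ) (l : List G), (⇑F)^[n] l.prod = (l.map (⇑F)^[n]).prod := by
    intro n l
    induction l with
    | nil => simp [hone]
    | cons x l ih => simp [hmul, ih]
  -- P (n + m) = F^[n] (P m) * P n
  have hPadd : ∀ m n, P (n + m) = (⇑F)^[n] (P m) * P n := by
    intro m n
    have hfun : ((fun i => (⇑F)^[i] c) ∘ fun x => n + x)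
        = ((⇑F)^[n] ∘ fun i => (⇑F)^[i] c) := by
      funext i
      simp [Function.comp_def, ← Function.iterate_add_apply]
    simp only [hP]
    rw [List.range_add, List.reverse_append, List.map_append, List.prod_append,
      hFn_prod, List.map_map, ← List.map_reverse, List.map_map, hfun]
  have hFa : F a = a * c⁻¹ := by rw [hca]; group
  have hFP : ∀ m, F (P m) * c = P (m + 1) := by
    intro m
    have hfun2 : ((fun i => (⇑F)^[i] c) ∘ Nat.succ) = (⇑F ∘ fun i => (⇑F)^[i] c) := by
      funext i
      simp [Function.comp_def, Function.iterate_succ_apply']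
    simp only [hP]
    rw [map_list_prod, List.range_succ_eq_map, List.reverse_cons, List.map_append,
      List.prod_append, List.map_map, ← List.map_reverse, List.map_map, hfun2]
    simp
  have hiter : ∀ m, (⇑F)^[m] a = a * (P m)⁻¹ := by
    intro m
    induction m with
    | zero => simp [hP]
    | succ m ih =>
      rw [Function.iterate_succ_apply', ih, map_mul, map_inv, hFa, ← hFP m]
      group
  -- if F^[m] a = a then F^[m] c = c
  have hac : ∀ m, (⇑F)^[m] a = a → (⇑F)^[m] c = c := by
    intro m hm
    have h2 : (⇑F)^[m] (F a) = F ((⇑F)^[m] a) := by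
      rw [← Function.iterate_succ_apply, Function.iterate_succ_apply']
    calc (⇑F)^[m] c = ((⇑F)^[m] (F a))⁻¹ * (⇑F)^[m] a := by rw [hca, hmul, hinv]
      _ = c := by rw [h2, hm, ← hca]
  -- F^[r*k] c = c
  have hcrk : ∀ k, (⇑F)^[r * k] c = c := by
    intro k
    induction k with
    | zero => simp
    | succ k ih => rw [Nat.mul_succ, Function.iterate_add_apply, hcr, ih]
  -- minimality: F^[m] c = c → r ∣ m
  have hdvd : ∀ m, (⇑F)^[m] c = c → r ∣ m := by
    intro m hm
    by_contra h
    have hmod : (⇑F)^[m % r] c = c := by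
      have h0 : (⇑F)^[m % r + r * (m / r)] c = c := by rw [Nat.mod_add_div]; exact hm
      rwa [Function.iterate_add_apply, hcrk] at h0
    exact hrmin (m % r) (Nat.pos_of_ne_zero (fun h0 => h (Nat.dvd_of_mod_eq_zero h0)))
      (Nat.mod_lt _ hr) hmod
  -- F^[r] (P r) = P r
  have hPrfix : (⇑F)^[r] (P r) = P r := by
    have hfun3 : ((⇑F)^[r] ∘ fun i => (⇑F)^[i] c) = fun i => (⇑F)^[i] c := by
      funext i
      show (⇑F)^[r] ((⇑F)^[i] c) = (⇑F)^[i] c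
      rw [← Function.iterate_add_apply, Nat.add_comm, Function.iterate_add_apply, hcr]
    simp only [hP]
    rw [hFn_prod, List.map_map, hfun3]
  -- P (k * r) = (P r)^k
  have hPmul : ∀ k, P (k * r) = (P r) ^ k := by
    intro k
    induction k with
    | zero => simp [hP]
    | succ k ih =>
      have hfix : (⇑F)^[r] ((P r) ^ k) = (P r) ^ k := by rw [hpow, hPrfix]
      rw [Nat.succ_mul, Nat.add_comm, hPadd, ih, hfix, pow_succ]
  constructor
  · rw [hiter, Nat.mul_comm, hPmul, ← hs, pow_orderOf_eq_one, inv_one, mul_one]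
  · intro m hm0 hmlt hma
    have hPm1 : P m = 1 := by
      have h1 := hiter m
      rw [hma] at h1
      exact inv_eq_one.mp (mul_left_cancel ((mul_one a).trans h1)).symm
    obtain ⟨k, hk⟩ := hdvd m (hac m hma)
    rw [hk, Nat.mul_comm, hPmul] at hPm1
    have hsk : s ∣ k := hs ▸ orderOf_dvd_of_pow_eq_one hPm1
    have hdm : r * s ∣ m := hk ▸ Nat.mul_dvd_mul_left r hsk
    exact absurd (Nat.le_of_dvd hm0 hdm) (Nat.not_le_of_lt hmlt)
end

section
/- Let L be a Lie algebra with a root-space decomposition L = H ⊕ ⨁_{α∈Φ} L_α with respect to an abelian subalgebra H, where each root space L_α is one-dimensional. If M is a subalgebra of L containing H in its normalizer with H ≤ C_{M+H}(H) = H, then M ∩ H is such that M = (H ∩ M) ⊕ ⨁_{β ∈ Φ(M+H,H)} M_β, where each M_β ≤ M; in particular every root space of M+H relative to H is contained in M. -/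
open scoped Classical

/-- Key linear-algebra lemma: if a submodule `V` is invariant under all the
operators `x ↦ ⁅x, h⁆` for `h ∈ H`, and a sum of eigenvectors with pairwise
distinct eigenvalue functionals lies in `V`, then each summand lies in `V`. -/
lemma stmt4_key {K L : Type*} [Field K] [LieRing L] [LieAlgebra K L]
    (H : LieSubalgebra K L) (V : Submodule K L)
    (hV : ∀ x ∈ V, ∀ h : H, ⁅x, (h : L)⁆ ∈ V)
    (S : Finset (Module.Dual K H)) :
    ∀ f : Module.Dual K H → L,
      (∀ γ ∈ S, ∀ h : H, ⁅f γ, (h : L)⁆ = γ h • f γ) →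
      (∑ γ ∈ S, f γ) ∈ V → ∀ β ∈ S, f β ∈ V := by
  induction S using Finset.strongInduction with
  | _ S ih =>
    intro f hf hsum β hβ
    rcases eq_or_ne S {β} with rfl | hSβ
    · simpa using hsum
    · have hex : ∃ α ∈ S, α ≠ β := by
        by_contra hc
        push_neg at hc
        exact hSβ (Finset.eq_singleton_iff_unique_mem.mpr ⟨hβ, hc⟩)
      obtain ⟨α, hαS, hαβ⟩ := hex
      have hh : ∃ h : H, α h ≠ β h := by
        by_contra hc
        push_neg at hc
        exact hαβ (LinearMap.ext hc)
      obtain ⟨h, hh⟩ := hh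
      set g : Module.Dual K H → L := fun γ => (γ h - α h) • f γ with hg
      have hgeig : ∀ γ ∈ S.erase α, ∀ h' : H, ⁅g γ, (h' : L)⁆ = γ h' • g γ := by
        intro γ hγ h'
        show ⁅(γ h - α h) • f γ, (h' : L)⁆ = γ h' • ((γ h - α h) • f γ)
        rw [smul_lie, hf γ (Finset.mem_of_mem_erase hγ) h', smul_comm]
      have hgsum : (∑ γ ∈ S.erase α, g γ) ∈ V := by
        have h1 : ∑ γ ∈ S.erase α, g γ = ∑ γ ∈ S, g γ := by
          apply Finset.sum_subset (Finset.erase_subset _ _)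
          intro x hx hx'
          have : x = α := by
            by_contra hne
            exact hx' (Finset.mem_erase.mpr ⟨hne, hx⟩)
          simp [hg, this]
        have hlsum : ⁅∑ γ ∈ S, f γ, (h : L)⁆ = ∑ γ ∈ S, ⁅f γ, (h : L)⁆ :=
          map_sum (AddMonoidHom.mk' (fun x : L => ⁅x, (h : L)⁆)
            (fun a b => add_lie a b _)) f S
        have h2 : ∑ γ ∈ S, g γ = ⁅∑ γ ∈ S, f γ, (h : L)⁆ - α h • ∑ γ ∈ S, f γ := by
          rw [hlsum, Finset.smul_sum, ← Finset.sum_sub_distrib]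
          refine Finset.sum_congr rfl fun γ hγ => ?_
          rw [hf γ hγ h]
          exact sub_smul _ _ _
        rw [h1, h2]
        exact sub_mem (hV _ hsum h) (Submodule.smul_mem _ _ hsum)
      have hβ' : β ∈ S.erase α := Finset.mem_erase.mpr ⟨fun e => hαβ e.symm, hβ⟩
      have := ih (S.erase α) (Finset.erase_ssubset hαS) g hgeig hgsum β hβ'
      have hne : β h - α h ≠ 0 := sub_ne_zero.mpr hh.symm
      have : f β = (β h - α h)⁻¹ • g β := by
        simp [hg, smul_smul, inv_mul_cancel₀ hne]
      rw [this]
      exact Submodule.smul_mem _ _ ‹g β ∈ V›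

/-- If `L = H ⊕ ⨁_{α ∈ Φ} L_α` is a root-space decomposition with respect to
an abelian subalgebra `H` with one-dimensional root spaces, and `M` is a
subalgebra normalized by `H` with `C_{M+H}(H) = H`, then
`M = (H ∩ M) ⊕ ⨁_β M_β`; in particular every root space of `M+H` relative to
`H` is contained in `M`. -/
theorem stmt4 {K L : Type*} [Field K] [LieRing L] [LieAlgebra K L]
    (H M : LieSubalgebra K L)
    (Φ : Set (Module.Dual K H)) (hΦ0 : (0 : Module.Dual K H) ∉ Φ)
    (Lsp : Module.Dual K H → Submodule K L)
    (hLsp : ∀ α x, x ∈ Lsp α ↔ ∀ h : H, ⁅x, (h : L)⁆ = α h • x)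
    (habelian : ∀ h h' : H, ⁅(h : L), (h' : L)⁆ = 0)
    (hdecomp : H.toSubmodule ⊔ (⨆ α ∈ Φ, Lsp α) = ⊤)
    (hdim : ∀ α ∈ Φ, Module.finrank K (Lsp α) = 1)
    (hnorm : ∀ m ∈ M, ∀ h : H, ⁅m, (h : L)⁆ ∈ M)
    (hcent : ∀ x ∈ (M ⊔ H : LieSubalgebra K L),
      (∀ h : H, ⁅x, (h : L)⁆ = 0) → x ∈ H) :
    (∀ β : Module.Dual K H, β ≠ 0 → ∀ x ∈ (M ⊔ H : LieSubalgebra K L),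
        (∀ h : H, ⁅x, (h : L)⁆ = β h • x) → x ∈ M) ∧
      M.toSubmodule = (M.toSubmodule ⊓ H.toSubmodule) ⊔
        (⨆ β ∈ Φ, (Lsp β ⊓ (M ⊔ H : LieSubalgebra K L).toSubmodule)) := by
  -- The submodule sup of M and H
  set P : Submodule K L := M.toSubmodule ⊔ H.toSubmodule with hP
  -- P is closed under bracket, so it equals (M ⊔ H).toSubmodule
  have hPsub : ∀ x ∈ P, ∀ y ∈ P, ⁅x, y⁆ ∈ P := by
    intro x hx y hy
    obtain ⟨m, hm, h, hh, rfl⟩ := Submodule.mem_sup.mp hx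
    obtain ⟨m', hm', h', hh', rfl⟩ := Submodule.mem_sup.mp hy
    have hmM : m ∈ M := hm
    have hm'M : m' ∈ M := hm'
    have : ⁅m + h, m' + h'⁆ = ⁅m, m'⁆ + ⁅m, h'⁆ + (-⁅m', h⁆) + ⁅h, h'⁆ := by
      rw [lie_add, add_lie, add_lie, lie_skew h m']
      abel
    rw [this, habelian ⟨h, hh⟩ ⟨h', hh'⟩]
    have : ⁅m, m'⁆ + ⁅m, h'⁆ + -⁅m', h⁆ ∈ M :=
      add_mem (add_mem (M.lie_mem hmM hm'M) (hnorm m hmM ⟨h', hh'⟩))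
        (neg_mem (hnorm m' hm'M ⟨h, hh⟩))
    rw [add_zero]
    exact Submodule.mem_sup_left this
  set N : LieSubalgebra K L :=
    { toSubmodule := P, lie_mem' := fun {x y} hx hy => hPsub x hx y hy } with hN
  have hPmem : ∀ x : L, x ∈ (M ⊔ H : LieSubalgebra K L) ↔ x ∈ P := by
    intro x
    constructor
    · intro hx
      have hMH : M ⊔ H ≤ N := by
        apply sup_le
        · intro y hy; exact Submodule.mem_sup_left hy
        · intro y hy; exact Submodule.mem_sup_right hy
      exact hMH hx
    · intro hx
      obtain ⟨m, hm, h, hh, rfl⟩ := Submodule.mem_sup.mp hx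
      exact add_mem ((le_sup_left : M ≤ M ⊔ H) hm) ((le_sup_right : H ≤ M ⊔ H) hh)
  -- P is invariant under bracketing with H, with values in M
  have hPinv : ∀ x ∈ P, ∀ h : H, ⁅x, (h : L)⁆ ∈ M := by
    intro x hx h
    obtain ⟨m, hm, h', hh', rfl⟩ := Submodule.mem_sup.mp hx
    rw [add_lie, habelian ⟨h', hh'⟩ h, add_zero]
    exact hnorm m hm h
  -- Part 1
  have part1 : ∀ β : Module.Dual K H, β ≠ 0 → ∀ x ∈ (M ⊔ H : LieSubalgebra K L),
      (∀ h : H, ⁅x, (h : L)⁆ = β h • x) → x ∈ M := by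
    intro β hβ x hx heig
    have hxP : x ∈ P := (hPmem x).mp hx
    obtain ⟨h, hh⟩ : ∃ h : H, β h ≠ 0 := by
      by_contra hc
      push_neg at hc
      exact hβ (LinearMap.ext hc)
    have : β h • x ∈ M := heig h ▸ hPinv x hxP h
    have : (β h)⁻¹ • (β h • x) ∈ M := M.toSubmodule.smul_mem _ this
    rwa [smul_smul, inv_mul_cancel₀ hh, one_smul] at this
  refine ⟨part1, ?_⟩
  apply le_antisymm
  · -- M ≤ RHS : the hard direction
    intro m hm
    have hmM : m ∈ M := hm
    -- auxiliary family of submodules covering everything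
    set p : Module.Dual K H → Submodule K L :=
      fun γ => if γ = 0 ∨ γ ∈ Φ then Lsp γ else ⊥ with hp
    have hpval : ∀ γ, (γ = 0 ∨ γ ∈ Φ) → p γ = Lsp γ := by
      intro γ hc; simp only [hp]; rw [if_pos hc]
    have hpbot : ∀ γ, ¬(γ = 0 ∨ γ ∈ Φ) → p γ = ⊥ := by
      intro γ hc; simp only [hp]; rw [if_neg hc]
    have htop : ⨆ γ, p γ = ⊤ := by
      rw [eq_top_iff, ← hdecomp]
      apply sup_le
      · have hH0 : H.toSubmodule ≤ Lsp 0 := by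
          intro x hx
          rw [hLsp]
          intro h
          simpa using habelian ⟨x, hx⟩ h
        refine le_trans hH0 ?_
        have : p 0 = Lsp 0 := by simp [hp]
        exact this ▸ le_iSup p 0
      · apply iSup₂_le
        intro α hα
        exact (hpval α (Or.inr hα)) ▸ le_iSup p α
    have hmtop : m ∈ ⨆ γ, p γ := htop ▸ Submodule.mem_top
    obtain ⟨f, hf, hfs⟩ := (Submodule.mem_iSup_iff_exists_finsupp p m).mp hmtop
    -- each f γ is an eigenvector and f γ = 0 off `{0} ∪ Φ`
    have hfe : ∀ γ, ∀ h : H, ⁅f γ, (h : L)⁆ = γ h • f γ := by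
      intro γ h
      by_cases hc : γ = 0 ∨ γ ∈ Φ
      · have : f γ ∈ Lsp γ := by have := hf γ; rwa [hpval γ hc] at this
        exact (hLsp γ (f γ)).mp this h
      · have : f γ ∈ (⊥ : Submodule K L) := by have := hf γ; rwa [hpbot γ hc] at this
        rw [Submodule.mem_bot] at this
        simp [this]
    have hsupΦ : ∀ γ ∈ f.support, γ = 0 ∨ γ ∈ Φ := by
      intro γ hγ
      by_contra hc
      have : f γ ∈ (⊥ : Submodule K L) := by have := hf γ; rwa [hpbot γ hc] at this
      rw [Submodule.mem_bot] at this
      exact Finsupp.mem_support_iff.mp hγ this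
    set S : Finset (Module.Dual K H) := insert 0 f.support with hS
    have hsum : ∑ γ ∈ S, f γ = m := by
      rw [← hfs, Finsupp.sum]
      symm
      apply Finset.sum_subset (Finset.subset_insert _ _)
      intro x _ hx
      exact Finsupp.notMem_support_iff.mp hx
    -- all components lie in P
    have hcomp : ∀ γ ∈ S, f γ ∈ P :=
      stmt4_key H P (fun x hx h => Submodule.mem_sup_left (hPinv x hx h)) S f
        (fun γ _ h => hfe γ h) (hsum ▸ Submodule.mem_sup_left hmM)
    -- components with γ ≠ 0 lie in M and in the iSup
    have hcompM : ∀ γ ∈ S.erase 0, f γ ∈ M := by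
      intro γ hγ
      obtain ⟨hγ0, hγS⟩ := Finset.mem_erase.mp hγ
      by_cases hsupp : γ ∈ f.support
      · exact part1 γ hγ0 (f γ) ((hPmem _).mpr (hcomp γ hγS)) (hfe γ)
      · rw [Finsupp.notMem_support_iff.mp hsupp]; exact M.zero_mem
    have hcompSup : ∀ γ ∈ S.erase 0,
        f γ ∈ ⨆ β ∈ Φ, (Lsp β ⊓ (M ⊔ H : LieSubalgebra K L).toSubmodule) := by
      intro γ hγ
      obtain ⟨hγ0, hγS⟩ := Finset.mem_erase.mp hγ
      by_cases hsupp : γ ∈ f.support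
      · have hγΦ : γ ∈ Φ := (hsupΦ γ hsupp).resolve_left hγ0
        have h1 : f γ ∈ Lsp γ := (hLsp γ (f γ)).mpr (hfe γ)
        have h2 : f γ ∈ (M ⊔ H : LieSubalgebra K L).toSubmodule :=
          (hPmem _).mpr (hcomp γ hγS)
        exact le_iSup₂ (f := fun β _ => Lsp β ⊓ (M ⊔ H : LieSubalgebra K L).toSubmodule)
          γ hγΦ (Submodule.mem_inf.mpr ⟨h1, h2⟩)
      · rw [Finsupp.notMem_support_iff.mp hsupp]; exact zero_mem _
    -- f 0 ∈ M ⊓ H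
    have h0S : (0 : Module.Dual K H) ∈ S := Finset.mem_insert_self _ _
    have hsplit : f 0 + ∑ γ ∈ S.erase 0, f γ = m := by
      rw [Finset.add_sum_erase S f h0S]; exact hsum
    have hf0M : f 0 ∈ M := by
      have : f 0 = m - ∑ γ ∈ S.erase 0, f γ := by
        rw [← hsplit]; abel
      rw [this]
      exact M.toSubmodule.sub_mem hmM (Submodule.sum_mem _ fun γ hγ => hcompM γ hγ)
    have hf0H : f 0 ∈ H := by
      apply hcent (f 0) ((hPmem _).mpr (hcomp 0 h0S))
      intro h
      simpa using hfe 0 h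
    -- conclude
    rw [hsplit.symm]
    exact Submodule.add_mem _
      (Submodule.mem_sup_left (Submodule.mem_inf.mpr ⟨hf0M, hf0H⟩))
      (Submodule.mem_sup_right (Submodule.sum_mem _ fun γ hγ => hcompSup γ hγ))
  · -- RHS ≤ M
    apply sup_le
    · exact inf_le_left
    · apply iSup₂_le
      intro β hβ x hx
      obtain ⟨h1, h2⟩ := Submodule.mem_inf.mp hx
      have hβ0 : β ≠ 0 := fun e => hΦ0 (e ▸ hβ)
      exact part1 β hβ0 x h2 ((hLsp β x).mp h1)
end

section
/- Let a_1, …, a_m be positive integers such that no integer appears more than a times in the sequence. Then for every real q ≥ 2, ∏_{i=1}^m (1 − 1/q^{a_i}) ≥ (1 − 1/q)^{2a}. -/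
lemma weier (s : Finset ℕ) (g : ℕ → ℝ) (h0 : ∀ t ∈ s, 0 ≤ g t)
    (h1 : ∀ t ∈ s, g t ≤ 1) :
    1 - ∑ t ∈ s, g t ≤ ∏ t ∈ s, (1 - g t) := by
  induction s using Finset.induction with
  | empty => simp
  | insert _ _ hx ih =>
    rename_i x s
    rw [Finset.sum_insert hx, Finset.prod_insert hx]
    have hgx : 0 ≤ g x := h0 x (Finset.mem_insert_self x s)
    have hgx1 : g x ≤ 1 := h1 x (Finset.mem_insert_self x s)
    have hsum : 0 ≤ ∑ t ∈ s, g t :=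
      Finset.sum_nonneg fun t ht => h0 t (Finset.mem_insert_of_mem ht)
    have ih' := ih (fun t ht => h0 t (Finset.mem_insert_of_mem ht))
      (fun t ht => h1 t (Finset.mem_insert_of_mem ht))
    nlinarith [mul_nonneg hgx hsum]

lemma prodIcc (q : ℝ) (hq : 2 ≤ q) (N : ℕ) :
    (1 - 1 / q) ^ 2 ≤ ∏ t ∈ Finset.Icc 1 N, (1 - 1 / q ^ t) := by
  have hq0 : (0:ℝ) < q := by linarith
  have hqinv : 1 / q ≤ 1 / 2 := by
    rw [div_le_div_iff₀ hq0 (by norm_num)]; linarith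
  have hfac : ∀ t, 1 ≤ t → 1 / q ^ t ≤ 1 / q := by
    intro t ht
    apply div_le_div_of_nonneg_left (by norm_num) hq0
    calc q = q ^ 1 := (pow_one q).symm
    _ ≤ q ^ t := pow_le_pow_right₀ (by linarith) ht
  rcases Nat.eq_zero_or_pos N with hN | hN
  · subst hN
    rw [show Finset.Icc 1 0 = (∅ : Finset ℕ) by decide, Finset.prod_empty]
    nlinarith [one_div_pos.mpr hq0]
  · have hsplit : Finset.Icc 1 N = insert 1 (Finset.Icc 2 N) := by
      ext x
      simp only [Finset.mem_Icc, Finset.mem_insert]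
      omega
    rw [hsplit, Finset.prod_insert (by simp)]
    have h2 : 1 - 1 / q ≤ ∏ t ∈ Finset.Icc 2 N, (1 - 1 / q ^ t) := by
      have := weier (Finset.Icc 2 N) (fun t => 1 / q ^ t)
        (fun t _ => by positivity)
        (fun t ht => by
          have h1t : (1:ℝ) ≤ q ^ t := by
            calc (1:ℝ) = 1 ^ t := (one_pow t).symm
              _ ≤ q ^ t := pow_le_pow_left₀ zero_le_one (by linarith) t
          rw [div_le_one (by positivity)]
          linarith)
      refine le_trans ?_ this
      have hsum : ∑ t ∈ Finset.Icc 2 N, 1 / q ^ t ≤ 1 / q := by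
        have hbound : ∑ t ∈ Finset.Icc 2 N, 1 / q ^ t
            = (1/q)^2 * ∑ t ∈ Finset.range (N - 1), (1/q) ^ t := by
          rw [Finset.mul_sum]
          rw [show Finset.Icc 2 N = Finset.map ⟨fun i => i + 2, fun a b h => Nat.add_right_cancel h⟩
            (Finset.range (N - 1)) from ?_]
          · rw [Finset.sum_map]
            apply Finset.sum_congr rfl
            intro t _
            show 1 / q ^ (t + 2) = _
            rw [← pow_add, one_div, one_div, ← inv_pow]
            ring_nf
          · ext x
            simp only [Finset.mem_Icc, Finset.mem_map, Finset.mem_range,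
              Function.Embedding.coeFn_mk]
            constructor
            · intro ⟨h1, h2⟩
              exact ⟨x - 2, by omega, show x - 2 + 2 = x by omega⟩
            · rintro ⟨y, hy, rfl⟩
              show 2 ≤ y + 2 ∧ y + 2 ≤ N
              exact ⟨by omega, by omega⟩
        rw [hbound]
        have h4 : ∑ t ∈ Finset.range (N - 1), (1/q) ^ t ≤ 2 := by
          calc ∑ t ∈ Finset.range (N - 1), (1/q) ^ t
              ≤ ∑ t ∈ Finset.range (N - 1), (1/(2:ℝ)) ^ t := by
                apply Finset.sum_le_sum
                intro t _
                exact pow_le_pow_left₀ (by positivity) hqinv t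
            _ ≤ 2 := sum_geometric_two_le _
        have h5 : (0:ℝ) ≤ (1/q)^2 := by positivity
        calc (1/q)^2 * ∑ t ∈ Finset.range (N - 1), (1/q) ^ t
            ≤ (1/q)^2 * 2 := by nlinarith
          _ ≤ 1/q := by
              rw [sq]
              nlinarith [one_div_pos.mpr hq0]
      linarith
    have hnn : 0 ≤ 1 - 1/q := by linarith
    have hf1 : (0:ℝ) ≤ 1 - 1 / q ^ 1 := by rw [pow_one]; linarith
    calc (1 - 1/q)^2 = (1 - 1/q) * (1 - 1/q) := sq (1 - 1/q)
      _ ≤ (1 - 1 / q ^ 1) * ∏ t ∈ Finset.Icc 2 N, (1 - 1 / q ^ t) := by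
          rw [pow_one]
          exact mul_le_mul le_rfl h2 (by linarith) hnn

/-- If no integer appears more than `A` times among the positive integers
`a_1, …, a_m`, then `∏ i (1 - 1/q^{a_i}) ≥ (1 - 1/q)^{2A}` for real `q ≥ 2`. -/
theorem stmt6 {m A : ℕ} (a : Fin m → ℕ) (ha : ∀ i, 0 < a i)
    (hmult : ∀ t : ℕ, (Finset.univ.filter (fun i => a i = t)).card ≤ A)
    (q : ℝ) (hq : 2 ≤ q) :
    (1 - 1 / q) ^ (2 * A) ≤ ∏ i, (1 - 1 / q ^ (a i)) := by
  have hq0 : (0:ℝ) < q := by linarith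
  have hqinv : 1 / q ≤ 1 / 2 := by
    rw [div_le_div_iff₀ hq0 (by norm_num)]; linarith
  set N := Finset.univ.sup a with hN
  have hmaps : ∀ i : Fin m, i ∈ Finset.univ → a i ∈ Finset.Icc 1 N := by
    intro i _
    rw [Finset.mem_Icc]
    exact ⟨ha i, Finset.le_sup (Finset.mem_univ i)⟩
  have hfib := Finset.prod_fiberwise_of_maps_to hmaps (fun i => 1 - 1 / q ^ (a i))
  rw [← hfib]
  have hfacbound : ∀ t, 1 ≤ t → (0:ℝ) ≤ 1 - 1/q^t ∧ 1 - 1/q^t ≤ 1 := by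
    intro t ht
    have h1 : (1:ℝ) ≤ q ^ t := by
      calc (1:ℝ) = 1 ^ t := (one_pow t).symm
        _ ≤ q ^ t := pow_le_pow_left₀ zero_le_one (by linarith) t
    have h2 : (0:ℝ) < q ^ t := by positivity
    constructor
    · have : 1 / q ^ t ≤ 1 := by rw [div_le_one h2]; exact h1
      linarith
    · have : 0 ≤ 1 / q ^ t := by positivity
      linarith
  have step1 : ∀ t ∈ Finset.Icc 1 N,
      (1 - 1/q^t) ^ A ≤ ∏ i ∈ Finset.univ.filter (fun i => a i = t), (1 - 1 / q ^ (a i)) := by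
    intro t ht
    rw [Finset.mem_Icc] at ht
    have heq : ∏ i ∈ Finset.univ.filter (fun i => a i = t), (1 - 1 / q ^ (a i))
        = (1 - 1/q^t) ^ (Finset.univ.filter (fun i => a i = t)).card := by
      rw [← Finset.prod_const]
      apply Finset.prod_congr rfl
      intro i hi
      rw [Finset.mem_filter] at hi
      rw [hi.2]
    rw [heq]
    obtain ⟨hnn, hle1⟩ := hfacbound t ht.1
    exact pow_le_pow_of_le_one hnn hle1 (hmult t)
  calc (1 - 1/q) ^ (2 * A) = ((1 - 1/q) ^ 2) ^ A := by rw [← pow_mul]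
    _ ≤ (∏ t ∈ Finset.Icc 1 N, (1 - 1 / q ^ t)) ^ A := by
        apply pow_le_pow_left₀ (by positivity) (prodIcc q hq N)
    _ = ∏ t ∈ Finset.Icc 1 N, (1 - 1 / q ^ t) ^ A := by rw [Finset.prod_pow]
    _ ≤ ∏ t ∈ Finset.Icc 1 N, ∏ i ∈ Finset.univ.filter (fun i => a i = t),
          (1 - 1 / q ^ (a i)) := by
        apply Finset.prod_le_prod
        · intro t ht
          rw [Finset.mem_Icc] at ht
          exact pow_nonneg (hfacbound t ht.1).1 A
        · exact step1
end

section
/- For m ≥ 1, the number of permutations in Sym_m that fix no transposition under conjugation equals m! · Σ_{h=0}^{⌊m/2⌋} (−1/2)^h (1/h!) (d_{m−2h} + d_{m−2h−1}), where d_j denotes the proportion of derangements in Sym_j (with the convention d_0 = 1, d_{−1} = 0). -/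
open Equiv Equiv.Perm Finset

noncomputable def dd (j : ℤ) : ℝ :=
  if 0 ≤ j then (numDerangements j.toNat : ℝ) / (Nat.factorial j.toNat) else 0

lemma dd_neg {j : ℤ} (h : j < 0) : dd j = 0 := by
  rw [dd, if_neg (not_le.2 h)]

lemma dd_ofNat (n : ℕ) : dd n = (numDerangements n : ℝ) / (Nat.factorial n) := by
  simp [dd]

lemma dd_rec (j : ℤ) : j * dd j = (j - 1) * dd (j - 1) + dd (j - 2) := by
  rcases lt_or_ge j 0 with hj | hj
  · rw [dd_neg hj, dd_neg (by omega), dd_neg (by omega)]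
    ring
  obtain ⟨n, rfl⟩ : ∃ n : ℕ, j = n := ⟨j.toNat, (Int.toNat_of_nonneg hj).symm⟩
  match n with
  | 0 => simp [dd_ofNat, dd_neg (by norm_num : (-1:ℤ) < 0), dd_neg (by norm_num : (-2:ℤ) < 0)]
  | 1 =>
      have h0 : ((1:ℕ):ℤ) - 1 = ((0:ℕ):ℤ) := by norm_num
      have h1 : ((1:ℕ):ℤ) - 2 = (-1 : ℤ) := by norm_num
      rw [h0, h1, dd_ofNat, dd_ofNat, dd_neg (by norm_num)]
      simp [numDerangements_one]
  | (n+2) =>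
      have h0 : ((n+2:ℕ):ℤ) - 1 = ((n+1:ℕ):ℤ) := by push_cast; ring
      have h1 : ((n+2:ℕ):ℤ) - 2 = ((n:ℕ):ℤ) := by push_cast; ring
      rw [h0, h1, dd_ofNat, dd_ofNat, dd_ofNat, numDerangements_add_two]
      have hf : (Nat.factorial (n+2) : ℝ) = (n+2) * (n+1) * Nat.factorial n := by
        rw [Nat.factorial_succ, Nat.factorial_succ]; push_cast; ring
      have hf1 : (Nat.factorial (n+1) : ℝ) = (n+1) * Nat.factorial n := by
        rw [Nat.factorial_succ]; push_cast; ring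
      have hne : (Nat.factorial n : ℝ) ≠ 0 := Nat.cast_ne_zero.2 (Nat.factorial_ne_zero n)
      have h2 : ((n:ℝ)+2) ≠ 0 := by positivity
      have h3 : ((n:ℝ)+1) ≠ 0 := by positivity
      rw [hf, hf1]
      push_cast
      field_simp
      ring

noncomputable def cc (h : ℕ) : ℝ := (-(1/2) : ℝ) ^ h * (1 / (Nat.factorial h : ℝ))

noncomputable def SS (m : ℕ) : ℝ := ∑ h ∈ Finset.range (m+1), cc h * dd ((m:ℤ) - 2*h)

lemma dd_vanish (m h : ℕ) (hh : m/2 + 1 ≤ h) : dd ((m:ℤ) - 2*h) = 0 :=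
  dd_neg (by omega)

lemma sum_eq_SS (m k : ℕ) (hk : m/2 + 1 ≤ k) :
    ∑ h ∈ Finset.range k, cc h * dd ((m:ℤ) - 2*h) = SS m := by
  rw [SS]
  rw [← Finset.sum_subset (Finset.range_subset_range.2 hk : Finset.range (m/2+1) ⊆ Finset.range k),
      ← Finset.sum_subset (Finset.range_subset_range.2 (by omega) : Finset.range (m/2+1) ⊆ Finset.range (m+1))]
  · intro x _ hx
    rw [dd_vanish m x (by simpa using hx), mul_zero]
  · intro x _ hx
    rw [dd_vanish m x (by simpa using hx), mul_zero]

lemma cc_succ (h : ℕ) : 2 * ((h:ℝ)+1) * cc (h+1) = - cc h := by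
  rw [cc, cc, pow_succ, Nat.factorial_succ]
  have hne : (Nat.factorial h : ℝ) ≠ 0 := Nat.cast_ne_zero.2 (Nat.factorial_ne_zero h)
  have h1 : ((h:ℝ)+1) ≠ 0 := by positivity
  push_cast
  field_simp

lemma SS_rec (n : ℕ) : ((n:ℝ)+3) * SS (n+3) = ((n:ℝ)+2) * SS (n+2) + SS n := by
  have key : ∀ h : ℕ, ((n:ℝ)+3) * (cc h * dd (((n:ℕ):ℤ)+3 - 2*h))
      = cc h * (((n:ℤ)+2-2*h) : ℤ) * dd ((n:ℤ)+2-2*h)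
        + cc h * dd ((n:ℤ)+1-2*h)
        + (2*(h:ℝ)) * (cc h * dd ((n:ℤ)+3-2*h)) := by
    intro h
    have hrec := dd_rec ((n:ℤ)+3-2*h)
    have e1 : (n:ℤ)+3-2*h - 1 = (n:ℤ)+2-2*h := by ring
    have e2 : (n:ℤ)+3-2*h - 2 = (n:ℤ)+1-2*h := by ring
    rw [e1, e2] at hrec
    have hcast : ((n:ℝ)+3) - 2*h = (((n:ℤ)+3-2*h : ℤ) : ℝ) := by push_cast; ring
    have : (((n:ℝ)+3) - 2*(h:ℝ)) * dd ((n:ℤ)+3-2*h)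
        = ((((n:ℤ)+2-2*h : ℤ)):ℝ) * dd ((n:ℤ)+2-2*h) + dd ((n:ℤ)+1-2*h) := by
      rw [hcast, hrec]; push_cast; ring
    linear_combination (cc h) * this
  have shift_sum : ∀ (M : ℤ) (k : ℕ),
      ∑ h ∈ Finset.range (k+1), (2*(h:ℝ)) * (cc h * dd (M-2*h))
        = - ∑ h ∈ Finset.range k, cc h * dd (M-2-2*h) := by
    intro M k
    rw [Finset.sum_range_succ']
    have e0 : (2*((0:ℕ):ℝ)) * (cc 0 * dd (M-2*(0:ℕ))) = 0 := by norm_num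
    rw [e0, add_zero, ← Finset.sum_neg_distrib]
    apply Finset.sum_congr rfl
    intro h _
    have earg : M - 2*((h+1:ℕ):ℤ) = (M - 2 - 2*h) := by push_cast; ring
    rw [earg]
    have hc := cc_succ h
    have : (((h+1:ℕ):ℝ)) = (h:ℝ)+1 := by push_cast; ring
    rw [this]
    linear_combination dd (M-2-2*(h:ℤ)) * hc
  have h3 : ((n:ℝ)+3) * SS (n+3) = ∑ h ∈ Finset.range (n+4), ((n:ℝ)+3) * (cc h * dd ((n:ℤ)+3-2*h)) := by
    rw [SS, Finset.mul_sum]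
    apply Finset.sum_congr rfl
    intro h _
    push_cast
    ring_nf
  rw [h3, Finset.sum_congr rfl (fun h _ => key h), Finset.sum_add_distrib, Finset.sum_add_distrib]
  have hterm2 : ∑ h ∈ Finset.range (n+4), cc h * dd ((n:ℤ)+1-2*h) = SS (n+1) := by
    rw [← sum_eq_SS (n+1) (n+4) (by omega)]
    apply Finset.sum_congr rfl
    intro h _
    push_cast
    ring_nf
  have hterm3 : ∑ h ∈ Finset.range (n+4), (2*(h:ℝ)) * (cc h * dd ((n:ℤ)+3-2*h)) = - SS (n+1) := by
    have := shift_sum ((n:ℤ)+3) (n+3)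
    rw [this, ← sum_eq_SS (n+1) (n+3) (by omega)]
    rw [neg_inj]
    apply Finset.sum_congr rfl
    intro h _
    push_cast
    ring_nf
  have hterm1 : ∑ h ∈ Finset.range (n+4), cc h * ((((n:ℤ)+2-2*h):ℤ):ℝ) * dd ((n:ℤ)+2-2*h)
      = ((n:ℝ)+2) * SS (n+2) + SS n := by
    have e : ∀ h:ℕ, cc h * ((((n:ℤ)+2-2*h):ℤ):ℝ) * dd ((n:ℤ)+2-2*h)
        = ((n:ℝ)+2) * (cc h * dd ((n:ℤ)+2-2*h)) - (2*(h:ℝ)) * (cc h * dd ((n:ℤ)+2-2*h)) := by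
      intro h; push_cast; ring
    rw [Finset.sum_congr rfl (fun h _ => e h), Finset.sum_sub_distrib, ← Finset.mul_sum]
    have hp1 : ∑ h ∈ Finset.range (n+4), cc h * dd ((n:ℤ)+2-2*h) = SS (n+2) := by
      rw [← sum_eq_SS (n+2) (n+4) (by omega)]
      apply Finset.sum_congr rfl
      intro h _
      push_cast
      ring_nf
    have hp2 : ∑ h ∈ Finset.range (n+4), (2*(h:ℝ)) * (cc h * dd ((n:ℤ)+2-2*h)) = - SS n := by
      have := shift_sum ((n:ℤ)+2) (n+3)
      rw [this, ← sum_eq_SS n (n+3) (by omega)]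
      rw [neg_inj]
      apply Finset.sum_congr rfl
      intro h _
      push_cast
      ring_nf
    rw [hp1, hp2]
    ring
  rw [hterm1, hterm2, hterm3]
  ring

def NSC {α : Type*} (σ : Equiv.Perm α) : Prop := ∀ x, σ (σ x) ≠ x

instance {α : Type*} [DecidableEq α] [Fintype α] : DecidablePred (@NSC α) := fun σ => by
  unfold NSC; infer_instance

/-- NSC-permutation counts transfer along type equivalences. -/
def nscCongr {α β : Type*} (e : α ≃ β) : {σ : Equiv.Perm α // NSC σ} ≃ {σ : Equiv.Perm β // NSC σ} :=
  e.permCongr.subtypeEquiv (fun σ => by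
    constructor
    · intro h b hb
      apply h (e.symm b)
      have := congrArg e.symm hb
      simpa using this
    · intro h a ha
      apply h (e a)
      simp [ha])

/-- Extending an NSC permutation of a subtype by the identity. -/
def nscExtendEquiv {α : Type*} [DecidableEq α] [Fintype α] (p : α → Prop) [DecidablePred p] :
    {ρ : Equiv.Perm (Subtype p) // NSC ρ} ≃
      {f : Equiv.Perm α // (∀ x, ¬ p x → f x = x) ∧ ∀ x, p x → f (f x) ≠ x} :=
  ((Equiv.Perm.subtypeEquivSubtypePerm p).subtypeEquiv (fun ρ => by
      constructor
      · intro h x hx hfx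
        have h1 : (Equiv.Perm.ofSubtype ρ) x = ρ ⟨x, hx⟩ := Equiv.Perm.ofSubtype_apply_of_mem ρ hx
        have h2 : (Equiv.Perm.ofSubtype ρ) (ρ ⟨x, hx⟩) = ρ (ρ ⟨x, hx⟩) :=
          Equiv.Perm.ofSubtype_apply_of_mem ρ (ρ ⟨x, hx⟩).2
        change (Equiv.Perm.ofSubtype ρ) ((Equiv.Perm.ofSubtype ρ) x) = x at hfx
        rw [h1, h2] at hfx
        exact h ⟨x, hx⟩ (Subtype.ext hfx)
      · intro h x hc
        have h1 : (Equiv.Perm.ofSubtype ρ) (x:α) = ρ x := Equiv.Perm.ofSubtype_apply_of_mem ρ x.2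
        have h2 : (Equiv.Perm.ofSubtype ρ) ((ρ x : Subtype p) : α) = ρ (ρ x) :=
          Equiv.Perm.ofSubtype_apply_of_mem ρ (ρ x).2
        apply h (x:α) x.2
        change (Equiv.Perm.ofSubtype ρ) ((Equiv.Perm.ofSubtype ρ) (x:α)) = (x:α)
        rw [h1, h2]
        exact congrArg Subtype.val hc)).trans
    (Equiv.subtypeSubtypeEquivSubtypeInter _ _)

section OptionCount
variable {α : Type*} [Fintype α] [DecidableEq α]

def Cfix (a : α) (τ : Perm α) : Prop := τ a ≠ a ∧ ∀ x, τ (τ x) = x → τ x = a ∨ x = a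

instance (a : α) : DecidablePred (Cfix a) := fun τ => by unfold Cfix; infer_instance

lemma nsc_decompose_none_iff (τ : Perm α) :
    ¬ NSC (Equiv.Perm.decomposeOption.symm ((none : Option α), τ)) := by
  intro h
  apply h none
  simp [Equiv.Perm.decomposeOption]

lemma nsc_decompose_some_iff (a : α) (τ : Perm α) :
    NSC (Equiv.Perm.decomposeOption.symm (some a, τ)) ↔ Cfix a τ := by
  set σ' := Equiv.Perm.decomposeOption.symm (some a, τ) with hσ'
  have hnone : σ' none = some a := by simp [hσ', Equiv.Perm.decomposeOption]
  have hsome : ∀ x : α, σ' (some x) = if τ x = a then none else some (τ x) := by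
    intro x
    by_cases hx : τ x = a
    · simp [hσ', Equiv.Perm.decomposeOption, hx]
    · have h1 : (some (τ x) : Option α) ≠ none := by simp
      have h2 : (some (τ x) : Option α) ≠ some a := by simpa using hx
      simp [hσ', Equiv.Perm.decomposeOption, swap_apply_of_ne_of_ne h1 h2, hx]
  constructor
  · intro h
    refine ⟨fun hc => h none ?_, fun x hx => ?_⟩
    · rw [hnone, hsome a, if_pos hc]
    · by_contra hcon
      push_neg at hcon
      obtain ⟨h1, h2⟩ := hcon
      apply h (some x)
      rw [hsome x, if_neg h1, hsome (τ x), hx, if_neg h2]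
  · rintro ⟨h1, h2⟩ z
    match z with
    | none =>
        rw [hnone, hsome a, if_neg h1]
        simp
    | some x =>
        by_cases hx : τ x = a
        · rw [hsome x, if_pos hx, hnone]
          intro hc
          injection hc with hc
          rw [← hc] at hx
          exact h1 hx
        · rw [hsome x, if_neg hx, hsome (τ x)]
          by_cases hy : τ (τ x) = a
          · rw [if_pos hy]; simp
          · rw [if_neg hy]
            intro hc
            injection hc with hc
            rcases h2 x hc with h | h
            · exact hx h
            · exact hy (by rw [hc, h])

theorem card_nsc_option :
    Nat.card {σ : Perm (Option α) // NSC σ} = ∑ a : α, Nat.card {τ : Perm α // Cfix a τ} := by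
  have e1 : {σ : Perm (Option α) // NSC σ} ≃
      {p : Option α × Perm α // NSC (Equiv.Perm.decomposeOption.symm (p.1, p.2))} :=
    Equiv.Perm.decomposeOption.subtypeEquiv
      (fun σ => by rw [Prod.mk.eta, Equiv.symm_apply_apply])
  have e2 : {p : Option α × Perm α // NSC (Equiv.Perm.decomposeOption.symm (p.1, p.2))} ≃
      Σ o : Option α, {τ : Perm α // NSC (Equiv.Perm.decomposeOption.symm (o, τ))} :=
    Equiv.subtypeProdEquivSigmaSubtype (fun o τ => NSC (Equiv.Perm.decomposeOption.symm (o, τ)))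
  have e3 : (Σ o : Option α, {τ : Perm α // NSC (Equiv.Perm.decomposeOption.symm (o, τ))}) ≃
      Σ a : α, {τ : Perm α // NSC (Equiv.Perm.decomposeOption.symm (some a, τ))} :=
    Equiv.sigmaOptionEquivOfSome _ (fun ⟨τ, h⟩ => nsc_decompose_none_iff τ h)
  have e4 : (Σ a : α, {τ : Perm α // NSC (Equiv.Perm.decomposeOption.symm (some a, τ))}) ≃
      Σ a : α, {τ : Perm α // Cfix a τ} :=
    Equiv.sigmaCongrRight (fun a => Equiv.subtypeEquivRight (fun τ => nsc_decompose_some_iff a τ))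
  rw [Nat.card_congr (((e1.trans e2).trans e3).trans e4)]
  rw [Nat.card_eq_fintype_card, Fintype.card_sigma]
  simp [Nat.card_eq_fintype_card]

end OptionCount

section Split
variable {α : Type*} [Fintype α] [DecidableEq α]

/-- Split a subtype by a decidable condition. -/
def subtypeSplit {γ : Type*} (p q : γ → Prop) [DecidablePred q] :
    {x // p x} ≃ {x // p x ∧ q x} ⊕ {x // p x ∧ ¬ q x} :=
  (Equiv.sumCompl (fun x : {x // p x} => q x.1)).symm.trans
    (Equiv.sumCongr (Equiv.subtypeSubtypeEquivSubtypeInter p q)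
      (Equiv.subtypeSubtypeEquivSubtypeInter p (fun x => ¬ q x)))

omit [Fintype α] in
lemma cfix_nsc_iff (a : α) (τ : Perm α) :
    (Cfix a τ ∧ ¬ τ (τ a) = a) ↔ NSC τ := by
  constructor
  · rintro ⟨⟨h1, h2⟩, h3⟩ x hx
    rcases h2 x hx with h | h
    · apply h3
      have h5 : τ a = x := by rw [← h, hx]
      rw [h5, h]
    · rw [h] at hx
      exact h3 hx
  · intro h
    exact ⟨⟨fun hc => h a (by rw [hc, hc]), fun x hx => absurd hx (h x)⟩, h a⟩

def Dfix (a b : α) (τ : Perm α) : Prop :=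
  τ a = b ∧ τ b = a ∧ ∀ x, x ≠ a → x ≠ b → τ (τ x) ≠ x

instance (a b : α) : DecidablePred (Dfix a b) := fun τ => by unfold Dfix; infer_instance

omit [Fintype α] in
lemma cfix_dfix_iff (a b : α) (hb : b ≠ a) (τ : Perm α) :
    ((Cfix a τ ∧ τ (τ a) = a) ∧ τ a = b) ↔ Dfix a b τ := by
  constructor
  · rintro ⟨⟨⟨h1, h2⟩, h3⟩, h4⟩
    refine ⟨h4, by rw [← h4, h3], fun x hxa hxb hc => ?_⟩
    rcases h2 x hc with h | h
    · apply hxb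
      rw [← hc, h, h4]
    · exact hxa h
  · rintro ⟨h1, h2, h3⟩
    have hca : Cfix a τ := by
      refine ⟨by rw [h1]; exact hb, fun x hx => ?_⟩
      by_cases hxa : x = a
      · right; exact hxa
      by_cases hxb : x = b
      · left; rw [hxb, h2]
      · exact absurd hx (h3 x hxa hxb)
    exact ⟨⟨hca, by rw [h1, h2]⟩, h1⟩

end Split

section DfixEquiv
variable {α : Type*} [Fintype α] [DecidableEq α]

omit [Fintype α] in
lemma dfix_ext_iff (a b : α) (hb : b ≠ a) (τ : Perm α) :
    Dfix a b τ ↔ ((∀ x, ¬(x ≠ a ∧ x ≠ b) → (Equiv.swap a b * τ) x = x) ∧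
      ∀ x, (x ≠ a ∧ x ≠ b) → (Equiv.swap a b * τ) ((Equiv.swap a b * τ) x) ≠ x) := by
  have happ : ∀ x, (Equiv.swap a b * τ) x = Equiv.swap a b (τ x) := fun x => rfl
  constructor
  · rintro ⟨h1, h2, h3⟩
    constructor
    · intro x hx
      rcases not_and_or.1 hx with hx | hx
      · push_neg at hx; subst hx
        rw [happ, h1, Equiv.swap_apply_right]
      · push_neg at hx; subst hx
        rw [happ, h2, Equiv.swap_apply_left]
    · rintro x ⟨hxa, hxb⟩ hc
      have ht1 : τ x ≠ a := fun h => hxb (τ.injective (h.trans h2.symm))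
      have ht2 : τ x ≠ b := fun h => hxa (τ.injective (h.trans h1.symm))
      rw [happ, happ, Equiv.swap_apply_of_ne_of_ne ht1 ht2] at hc
      by_cases hq : τ (τ x) = a
      · rw [hq, Equiv.swap_apply_left] at hc; exact hxb hc.symm
      by_cases hq2 : τ (τ x) = b
      · rw [hq2, Equiv.swap_apply_right] at hc; exact hxa hc.symm
      · rw [Equiv.swap_apply_of_ne_of_ne hq hq2] at hc; exact h3 x hxa hxb hc
  · rintro ⟨hfix, hn⟩
    have hfa : τ a = b := by
      have h0 := hfix a (by simp)
      rw [happ] at h0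
      have h1 := congrArg (Equiv.swap a b) h0
      rwa [Equiv.swap_apply_self, Equiv.swap_apply_left] at h1
    have hfb : τ b = a := by
      have h0 := hfix b (by simp)
      rw [happ] at h0
      have h1 := congrArg (Equiv.swap a b) h0
      rwa [Equiv.swap_apply_self, Equiv.swap_apply_right] at h1
    refine ⟨hfa, hfb, fun x hxa hxb hc => ?_⟩
    have ht1 : τ x ≠ a := fun h => hxb (τ.injective (h.trans hfb.symm))
    have ht2 : τ x ≠ b := fun h => hxa (τ.injective (h.trans hfa.symm))
    apply hn x ⟨hxa, hxb⟩
    rw [happ, happ, Equiv.swap_apply_of_ne_of_ne ht1 ht2, hc,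
      Equiv.swap_apply_of_ne_of_ne hxa hxb]

def dfixEquiv (a b : α) (hb : b ≠ a) :
    {τ : Perm α // Dfix a b τ} ≃ {ρ : Perm {x : α // x ≠ a ∧ x ≠ b} // NSC ρ} :=
  (((Equiv.mulLeft (Equiv.swap a b)).subtypeEquiv
      (fun τ => by exact dfix_ext_iff a b hb τ) :
    {τ : Perm α // Dfix a b τ} ≃
      {f : Perm α // (∀ x, ¬(x ≠ a ∧ x ≠ b) → f x = x) ∧
        ∀ x, (x ≠ a ∧ x ≠ b) → f (f x) ≠ x})).trans
    (nscExtendEquiv (fun x => x ≠ a ∧ x ≠ b)).symm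

def partBEquiv (a : α) :
    {τ : Perm α // Cfix a τ ∧ τ (τ a) = a} ≃
      Σ b : {b : α // b ≠ a}, {ρ : Perm {x : α // x ≠ a ∧ x ≠ (b:α)} // NSC ρ} := by
  refine ((Equiv.sigmaFiberEquiv
      (fun t : {τ : Perm α // Cfix a τ ∧ τ (τ a) = a} =>
        (⟨t.1 a, t.2.1.1⟩ : {b : α // b ≠ a}))).symm).trans
    (Equiv.sigmaCongrRight (fun b => ?_))
  refine (Equiv.subtypeEquivRight (fun t => Subtype.ext_iff)).trans ?_
  refine (Equiv.subtypeSubtypeEquivSubtypeInter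
      (fun τ : Perm α => Cfix a τ ∧ τ (τ a) = a) (fun τ => τ a = (b:α))).trans ?_
  exact (Equiv.subtypeEquivRight (fun τ => cfix_dfix_iff a (b:α) b.2 τ)).trans
    (dfixEquiv a (b:α) b.2)

theorem card_cfix (a : α) :
    Nat.card {τ : Perm α // Cfix a τ}
      = Nat.card {τ : Perm α // NSC τ}
        + ∑ b : {b : α // b ≠ a},
            Nat.card {ρ : Perm {x : α // x ≠ a ∧ x ≠ (b:α)} // NSC ρ} := by
  have e := (subtypeSplit (Cfix a) (fun τ : Perm α => τ (τ a) = a)).trans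
    (Equiv.sumCongr (partBEquiv a) (Equiv.subtypeEquivRight (cfix_nsc_iff a)))
  rw [Nat.card_congr e, Nat.card_sum, add_comm]
  congr 1
  rw [Nat.card_eq_fintype_card, Fintype.card_sigma]
  simp [Nat.card_eq_fintype_card]

end DfixEquiv

noncomputable def gg (n : ℕ) : ℕ := Nat.card {σ : Perm (Fin n) // NSC σ}

lemma card_nsc_eq_gg {α : Type*} [Fintype α] [DecidableEq α] :
    Nat.card {σ : Perm α // NSC σ} = gg (Fintype.card α) :=
  Nat.card_congr (nscCongr (Fintype.equivFin α))

lemma card_ne_one {α : Type*} [Fintype α] [DecidableEq α] (a : α) :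
    Fintype.card {x : α // x ≠ a} = Fintype.card α - 1 := by
  have h := Fintype.card_subtype_compl (fun x : α => x = a)
  rw [Fintype.card_subtype_eq] at h
  exact h

lemma card_ne_pair {α : Type*} [Fintype α] [DecidableEq α] (a b : α) (hab : b ≠ a) :
    Fintype.card {x : α // x ≠ a ∧ x ≠ b} = Fintype.card α - 2 := by
  rw [Fintype.card_subtype]
  have h : (Finset.univ.filter (fun x : α => x ≠ a ∧ x ≠ b)) = Finset.univ \ {a, b} := by
    ext x
    simp [not_or]
  rw [h, Finset.card_sdiff_of_subset (by simp)]
  rw [Finset.card_univ, Finset.card_insert_of_notMem (by simpa using hab.symm),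
    Finset.card_singleton]

theorem gg_rec (n : ℕ) : gg (n+3) = (n+2) * gg (n+2) + ((n+2) * (n+1)) * gg n := by
  have h1 : Nat.card {σ : Perm (Option (Fin (n+2))) // NSC σ} = gg (n+3) := by
    rw [card_nsc_eq_gg]
    congr 1
    simp
  rw [← h1, card_nsc_option]
  have h2 : ∀ a : Fin (n+2), Nat.card {τ : Perm (Fin (n+2)) // Cfix a τ}
      = gg (n+2) + (n+1) * gg n := by
    intro a
    rw [card_cfix a, card_nsc_eq_gg, Fintype.card_fin]
    congr 1
    have h3 : ∀ b : {b : Fin (n+2) // b ≠ a},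
        Nat.card {ρ : Perm {x : Fin (n+2) // x ≠ a ∧ x ≠ (b:Fin (n+2))} // NSC ρ} = gg n := by
      intro b
      rw [card_nsc_eq_gg, card_ne_pair a (b: Fin (n+2)) b.2, Fintype.card_fin]
      norm_num
    rw [Finset.sum_congr rfl (fun b _ => h3 b), Finset.sum_const, smul_eq_mul,
      Finset.card_univ, card_ne_one a, Fintype.card_fin]
    norm_num
  rw [Finset.sum_congr rfl (fun a _ => h2 a), Finset.sum_const, smul_eq_mul,
    Finset.card_univ, Fintype.card_fin]
  ring

lemma gg_zero : gg 0 = 1 := by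
  rw [gg, Nat.card_eq_fintype_card]
  decide

lemma gg_one : gg 1 = 0 := by
  rw [gg, Nat.card_eq_fintype_card]
  decide

lemma gg_two : gg 2 = 0 := by
  rw [gg, Nat.card_eq_fintype_card]
  decide

section OKCount
variable {α : Type*} [Fintype α] [DecidableEq α]

def OKP {α : Type*} (w : Perm α) : Prop :=
  (∀ x, w (w x) = x → w x = x) ∧ ∀ x y, w x = x → w y = y → x = y

instance : DecidablePred (@OKP α) := fun w => by unfold OKP; infer_instance

omit [Fintype α] [DecidableEq α] in
lemma okp_nofix_iff (w : Perm α) : (OKP w ∧ ¬ ∃ x, w x = x) ↔ NSC w := by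
  constructor
  · rintro ⟨⟨h1, _⟩, h3⟩ x hx
    exact h3 ⟨x, h1 x hx⟩
  · intro h
    refine ⟨⟨fun x hx => absurd hx (h x), fun x y hx _ => ?_⟩,
      fun ⟨x, hx⟩ => h x (by rw [hx, hx])⟩
    exact absurd (show w (w x) = x by rw [hx, hx]) (h x)

def fixPt (t : {w : Perm α // OKP w ∧ ∃ x, w x = x}) : α :=
  Finset.choose (fun x => t.1 x = x) Finset.univ (by
    obtain ⟨⟨_, h2⟩, ⟨x, hx⟩⟩ := t.2
    exact ⟨x, ⟨Finset.mem_univ x, hx⟩, fun y ⟨_, hy⟩ => h2 y x hy hx⟩)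

lemma fixPt_spec (t : {w : Perm α // OKP w ∧ ∃ x, w x = x}) : t.1 (fixPt t) = fixPt t := by
  unfold fixPt
  exact Finset.choose_property (fun x => t.1 x = x) Finset.univ _

def fiberEquiv (a : α) :
    {t : {w : Perm α // OKP w ∧ ∃ x, w x = x} // fixPt t = a} ≃
      {f : Perm α // (∀ x, ¬ x ≠ a → f x = x) ∧ ∀ x, x ≠ a → f (f x) ≠ x} where
  toFun s := ⟨s.1.1, by
    have hfix := fixPt_spec s.1
    rw [s.2] at hfix
    obtain ⟨h1, h2⟩ := s.1.2.1
    constructor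
    · intro x hx
      push_neg at hx
      rw [hx]
      exact hfix
    · intro x hx hc
      exact hx (h2 x a (h1 x hc) hfix)⟩
  invFun f := ⟨⟨f.1, by
      have hfa : f.1 a = a := f.2.1 a (by simp)
      have huniq : ∀ x, f.1 x = x → x = a := by
        intro x hx
        by_contra hxa
        exact f.2.2 x hxa (by rw [hx, hx])
      refine ⟨⟨fun x hx => ?_, fun x y hx hy => (huniq x hx).trans (huniq y hy).symm⟩, ⟨a, hfa⟩⟩
      by_cases hxa : x = a
      · rw [hxa]; exact hfa
      · exact absurd hx (f.2.2 x hxa)⟩, by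
    have hfa : f.1 a = a := f.2.1 a (by simp)
    have huniq : ∀ x, f.1 x = x → x = a := by
      intro x hx
      by_contra hxa
      exact f.2.2 x hxa (by rw [hx, hx])
    apply huniq
    unfold fixPt
    exact Finset.choose_property (fun x => f.1 x = x) Finset.univ _⟩
  left_inv s := Subtype.ext (Subtype.ext rfl)
  right_inv f := Subtype.ext rfl

theorem card_okp : Nat.card {w : Perm α // OKP w}
    = gg (Fintype.card α) + Fintype.card α * gg (Fintype.card α - 1) := by
  have e := (subtypeSplit (@OKP α) (fun w => ∃ x, w x = x)).trans
    (Equiv.sumCongr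
      ((Equiv.sigmaFiberEquiv (@fixPt α _ _)).symm.trans
        (Equiv.sigmaCongrRight (fun a =>
          (fiberEquiv a).trans (nscExtendEquiv (fun x => x ≠ a)).symm)))
      (Equiv.subtypeEquivRight okp_nofix_iff))
  rw [Nat.card_congr e, Nat.card_sum, add_comm]
  congr 1
  · exact card_nsc_eq_gg
  · rw [Nat.card_eq_fintype_card, Fintype.card_sigma]
    have h3 : ∀ a : α, Fintype.card {ρ : Perm {x : α // x ≠ a} // NSC ρ}
        = gg (Fintype.card α - 1) := by
      intro a
      rw [← Nat.card_eq_fintype_card, card_nsc_eq_gg, card_ne_one a]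
    rw [Finset.sum_congr rfl (fun a _ => h3 a), Finset.sum_const, smul_eq_mul,
      Finset.card_univ]

omit [Fintype α] in
lemma noswap_iff_okp (w : Perm α) :
    (∀ t : Perm α, t.IsSwap → w * t ≠ t * w) ↔ OKP w := by
  constructor
  · intro h
    constructor
    · intro x hx
      by_contra hne
      apply h (Equiv.swap x (w x)) ⟨x, w x, Ne.symm hne, rfl⟩
      rw [mul_swap_eq_swap_mul, hx, Equiv.swap_comm]
    · intro x y hx hy
      by_contra hxy
      apply h (Equiv.swap x y) ⟨x, y, hxy, rfl⟩
      rw [mul_swap_eq_swap_mul, hx, hy]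
  · rintro ⟨h1, h2⟩ t ⟨i, j, hij, rfl⟩ hc
    rw [mul_swap_eq_swap_mul] at hc
    have hs : Equiv.swap (w i) (w j) = Equiv.swap i j := mul_right_cancel hc
    have hj : w j = Equiv.swap i j (w i) := by
      rw [← hs, Equiv.swap_apply_left]
    by_cases hwi : w i = i
    · rw [hwi, Equiv.swap_apply_left] at hj
      exact hij (h2 i j hwi hj)
    by_cases hwj : w i = j
    · rw [hwj, Equiv.swap_apply_right] at hj
      exact hwi (h1 i (by rw [hwj]; exact hj))
    · rw [Equiv.swap_apply_of_ne_of_ne hwi hwj] at hj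
      exact hij (w.injective hj).symm

theorem card_main : Nat.card {w : Perm α // ∀ t : Perm α, t.IsSwap → w * t ≠ t * w}
    = gg (Fintype.card α) + Fintype.card α * gg (Fintype.card α - 1) := by
  rw [← card_okp]
  exact Nat.card_congr (Equiv.subtypeEquivRight noswap_iff_okp)

end OKCount


/-- The number of permutations in `Sym_m` commuting with no transposition
equals `m! · Σ_{h=0}^{⌊m/2⌋} (−1/2)^h (1/h!) (d_{m−2h} + d_{m−2h−1})`, where
`d_j` is the proportion of derangements in `Sym_j` (`d_0 = 1`, `d_{−1} = 0`). -/
theorem stmt8 (m : ℕ) (hm : 1 ≤ m)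
    (d : ℤ → ℝ)
    (hd : ∀ j : ℤ, d j = if 0 ≤ j then
      (numDerangements j.toNat : ℝ) / (Nat.factorial j.toNat) else 0) :
    (Nat.card {w : Equiv.Perm (Fin m) //
        ∀ t : Equiv.Perm (Fin m), t.IsSwap → w * t ≠ t * w} : ℝ)
      = (Nat.factorial m : ℝ) * ∑ h ∈ Finset.range (m / 2 + 1),
          (-(1 / 2) : ℝ) ^ h * (1 / (Nat.factorial h : ℝ)) *
            (d ((m : ℤ) - 2 * h) + d ((m : ℤ) - 2 * h - 1)) := by
  have hdd : d = dd := funext fun j => by rw [hd j]; simp [dd]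
  subst hdd
  -- key identity : (gg n : ℝ) = n ! * SS n
  have key : ∀ n : ℕ, (gg n : ℝ) = (Nat.factorial n : ℝ) * SS n := by
    intro n
    induction n using Nat.strong_induction_on with
    | _ n ih =>
      match n with
      | 0 =>
          rw [gg_zero, SS]
          norm_num [cc, dd, numDerangements_zero]
      | 1 =>
          rw [gg_one, SS]
          rw [Finset.sum_range_succ, Finset.sum_range_one]
          norm_num [cc, dd, numDerangements_one]
      | 2 =>
          have hD2 : numDerangements 2 = 1 := by
            rw [show (2:ℕ) = 0 + 2 from rfl, numDerangements_add_two,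
              numDerangements_one, numDerangements_zero]
          rw [gg_two, SS]
          rw [Finset.sum_range_succ, Finset.sum_range_succ, Finset.sum_range_one]
          norm_num [cc, dd, numDerangements_zero]
          rw [show Int.toNat 2 = 2 from rfl, hD2]
          norm_num [Nat.factorial]
      | (k+3) =>
          rw [gg_rec k]
          push_cast
          rw [ih (k+2) (by omega), ih k (by omega)]
          have hr := SS_rec k
          have e3 : (Nat.factorial (k+3) : ℝ) = ((k:ℝ)+3) * (Nat.factorial (k+2)) := by
            rw [Nat.factorial_succ]; push_cast; ring
          have e2 : (Nat.factorial (k+2) : ℝ) = ((k:ℝ)+2) * (((k:ℝ)+1) * (Nat.factorial k)) := by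
            rw [Nat.factorial_succ, Nat.factorial_succ]; push_cast; ring
          rw [e3]
          linear_combination (-(Nat.factorial (k+2):ℝ)) * hr - SS k * e2
  have hcount := card_main (α := Fin m)
  rw [Fintype.card_fin] at hcount
  rw [hcount]
  push_cast
  rw [key m, key (m-1)]
  have split : ∑ h ∈ Finset.range (m / 2 + 1),
      (-(1 / 2) : ℝ) ^ h * (1 / (Nat.factorial h : ℝ)) *
        (dd ((m : ℤ) - 2 * h) + dd ((m : ℤ) - 2 * h - 1))
      = SS m + SS (m-1) := by
    rw [← sum_eq_SS m (m/2+1) (le_refl _), ← sum_eq_SS (m-1) (m/2+1) (by omega),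
      ← Finset.sum_add_distrib]
    apply Finset.sum_congr rfl
    intro h _
    have harg : ((m-1:ℕ):ℤ) - 2*h = (m:ℤ) - 2*h - 1 := by omega
    rw [harg, cc]
    ring
  rw [split]
  have hfac : ((m:ℝ)) * (Nat.factorial (m-1) : ℝ) = (Nat.factorial m : ℝ) := by
    rw [← Nat.cast_mul, Nat.mul_factorial_pred (by omega : m ≠ 0)]
  linear_combination SS (m-1) * hfac
end

section
/- In the hyperoctahedral group W(B_ℓ) of signed permutations of {±1,…,±ℓ}, the proportion of elements that commute with no reflection tends to e^{-5/4} as ℓ → ∞. -/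
/-- The negation map on `{±1, …, ±ℓ}`, modelled as `Fin ℓ × Bool`. -/
def negP (l : ℕ) : Equiv.Perm (Fin l × Bool) :=
  Equiv.prodCongr (Equiv.refl _)
    (Function.Involutive.toPerm not (fun b => Bool.not_not b))

/-- The reflections of the hyperoctahedral group `W(B_ℓ)`: reflections in the
roots `±e_i`, `e_i − e_j` and `e_i + e_j`. -/
def reflB (l : ℕ) : Set (Equiv.Perm (Fin l × Bool)) :=
  {t | (∃ i, t = Equiv.swap (i, true) (i, false)) ∨
    (∃ i j, i ≠ j ∧
      t = Equiv.swap (i, true) (j, true) * Equiv.swap (i, false) (j, false)) ∨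
    (∃ i j, i ≠ j ∧
      t = Equiv.swap (i, true) (j, false) * Equiv.swap (i, false) (j, true))}

/-- The hyperoctahedral group `W(B_ℓ)` of signed permutations: permutations of
`{±1, …, ±ℓ}` commuting with negation. -/
def WB (l : ℕ) : Subgroup (Equiv.Perm (Fin l × Bool)) :=
  Subgroup.centralizer {negP l}

namespace Stmt9
open Finset Equiv

variable {l : ℕ}

lemma negP_apply (x : Fin l × Bool) : negP l x = (x.1, !x.2) := rfl

/-- the signed permutation built from a permutation and a sign vector -/
def mk (σ : Perm (Fin l)) (ε : Fin l → Bool) : Perm (Fin l × Bool) where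
  toFun x := (σ x.1, cond x.2 (ε x.1) (!ε x.1))
  invFun y := (σ.symm y.1, y.2 == ε (σ.symm y.1))
  left_inv := by
    rintro ⟨i, b⟩
    simp only [Equiv.symm_apply_apply]
    cases b <;> cases h : ε i <;> simp [h]
  right_inv := by
    rintro ⟨j, c⟩
    simp only []
    cases c <;> cases h : ε (σ.symm j) <;> simp [h]

lemma mk_apply (σ : Perm (Fin l)) (ε : Fin l → Bool) (x : Fin l × Bool) :
    mk σ ε x = (σ x.1, cond x.2 (ε x.1) (!ε x.1)) := rfl

lemma mk_mem (σ : Perm (Fin l)) (ε : Fin l → Bool) : mk σ ε ∈ WB l := by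
  rw [WB, Subgroup.mem_centralizer_iff]
  rintro h rfl
  ext ⟨i, b⟩ : 1
  simp only [Equiv.Perm.mul_apply, negP_apply, mk_apply]
  cases b <;> cases h : ε i <;> simp [h]

lemma wb_neg_apply (w : Equiv.Perm (Fin l × Bool)) (hw : w ∈ WB l) (x : Fin l × Bool) :
    w (x.1, !x.2) = ((w x).1, !(w x).2) := by
  rw [WB, Subgroup.mem_centralizer_iff] at hw
  have := hw (negP l) rfl
  have h2 : w (negP l x) = negP l (w x) := by
    rw [← Equiv.Perm.mul_apply, ← this, Equiv.Perm.mul_apply]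
  simpa [negP_apply] using h2

lemma inv_mem_WB (w : Equiv.Perm (Fin l × Bool)) (hw : w ∈ WB l) : w⁻¹ ∈ WB l :=
  (WB l).inv_mem hw

lemma inv_fst (w : Equiv.Perm (Fin l × Bool)) (hw : w ∈ WB l) (x : Fin l × Bool) (b : Bool) :
    (w⁻¹ ((w x).1, b)).1 = x.1 := by
  by_cases hb : b = (w x).2
  · rw [hb, Prod.mk.eta, Equiv.Perm.inv_def, Equiv.symm_apply_apply]
  · have hb' : b = !(w x).2 := by
      cases b <;> cases h : (w x).2 <;> simp_all
    rw [hb', ← wb_neg_apply w hw x, Equiv.Perm.inv_def, Equiv.symm_apply_apply]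

/-- the underlying permutation of `Fin l` -/
def phi (w : Equiv.Perm (Fin l × Bool)) (hw : w ∈ WB l) : Perm (Fin l) where
  toFun i := (w (i, true)).1
  invFun j := (w⁻¹ (j, true)).1
  left_inv := fun i => inv_fst w hw (i, true) true
  right_inv := fun j => by
    have := inv_fst w⁻¹ (inv_mem_WB w hw) (j, true) true
    rwa [inv_inv] at this
  
lemma phi_apply (w : Equiv.Perm (Fin l × Bool)) (hw : w ∈ WB l) (i : Fin l) :
    phi w hw i = (w (i, true)).1 := rfl

/-- the model equivalence -/
def modelEquiv : (Perm (Fin l) × (Fin l → Bool)) ≃ WB l where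
  toFun p := ⟨mk p.1 p.2, mk_mem p.1 p.2⟩
  invFun w := (phi w w.2, fun i => ((w : Perm (Fin l × Bool)) (i, true)).2)
  left_inv := by
    rintro ⟨σ, ε⟩
    refine Prod.ext ?_ ?_
    · ext i
      simp [phi, mk_apply]
    · funext i
      simp [mk_apply]
  right_inv := by
    rintro ⟨w, hw⟩
    refine Subtype.ext ?_
    ext ⟨i, b⟩ : 1
    cases b
    · show ((w (i, true)).1, cond false ((w (i,true)).2) (!(w (i,true)).2)) = w (i, false)
      have h := wb_neg_apply w hw (i, true)
      simp only [Bool.not_true] at h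
      rw [cond_false, ← h]
    · show ((w (i, true)).1, cond true ((w (i,true)).2) (!(w (i,true)).2)) = w (i, true)
      rw [cond_true, Prod.mk.eta]

lemma card_WB : Nat.card (WB l) = 2 ^ l * Nat.factorial l := by
  rw [← Nat.card_congr (modelEquiv (l := l))]
  simp [Nat.card_eq_fintype_card, Fintype.card_perm, mul_comm]



lemma t1_apply (i : Fin l) (x : Fin l × Bool) :
    Equiv.swap ((i, true) : Fin l × Bool) (i, false) x = if x.1 = i then (x.1, !x.2) else x := by
  rcases x with ⟨m, b⟩
  by_cases hm : m = i
  · subst hm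
    cases b <;> simp [Equiv.swap_apply_def]
  · simp [Equiv.swap_apply_def, Prod.ext_iff, hm]

lemma t2_apply (i j : Fin l) (x : Fin l × Bool) :
    (Equiv.swap ((i, true) : Fin l × Bool) (j, true) * Equiv.swap (i, false) (j, false)) x
      = if x.1 = i then (j, x.2) else if x.1 = j then (i, x.2) else x := by
  rcases x with ⟨m, b⟩
  by_cases hm : m = i
  · subst hm
    by_cases hj : m = j
    · subst hj; cases b <;> simp [Equiv.swap_apply_def]
    · cases b <;> simp [Equiv.Perm.mul_apply, Equiv.swap_apply_def, Prod.ext_iff, hj]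
  · by_cases hj : m = j
    · subst hj; cases b <;> simp [Equiv.Perm.mul_apply, Equiv.swap_apply_def, Prod.ext_iff, hm]
    · cases b <;> simp [Equiv.Perm.mul_apply, Equiv.swap_apply_def, Prod.ext_iff, hm, hj]

lemma t3_apply (i j : Fin l) (hij : i ≠ j) (x : Fin l × Bool) :
    (Equiv.swap ((i, true) : Fin l × Bool) (j, false) * Equiv.swap (i, false) (j, true)) x
      = if x.1 = i then (j, !x.2) else if x.1 = j then (i, !x.2) else x := by
  rcases x with ⟨m, b⟩
  by_cases hm : m = i
  · subst hm
    cases b <;> simp [Equiv.Perm.mul_apply, Equiv.swap_apply_def, Prod.ext_iff, hij,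
      (Ne.symm hij : j ≠ m)]
  · by_cases hj : m = j
    · subst hj; cases b <;> simp [Equiv.Perm.mul_apply, Equiv.swap_apply_def, Prod.ext_iff, hm,
        hij, Ne.symm hij]
    · cases b <;> simp [Equiv.Perm.mul_apply, Equiv.swap_apply_def, Prod.ext_iff, hm, hj]


/-- the good pairs: derangement with all 2-cycles sign-antisymmetric -/
def GoodP (p : Perm (Fin l) × (Fin l → Bool)) : Prop :=
  (∀ i, p.1 i ≠ i) ∧ ∀ i, p.1 (p.1 i) = i → p.2 (p.1 i) ≠ p.2 i

instance : DecidablePred (GoodP (l := l)) := fun p => by unfold GoodP; infer_instance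

lemma commute_t1 (σ : Perm (Fin l)) (ε : Fin l → Bool) (i : Fin l) (hi : σ i = i) :
    mk σ ε * Equiv.swap (i, true) (i, false) = Equiv.swap (i, true) (i, false) * mk σ ε := by
  ext ⟨m, b⟩ : 1
  simp only [Equiv.Perm.mul_apply, t1_apply, mk_apply]
  by_cases hm : m = i
  · subst hm
    simp only [if_pos rfl, mk_apply, hi]
    cases b <;> cases h : ε m <;> simp [h, hi]
  · have h2 : σ m ≠ i := fun h => hm (σ.injective (by rw [h, hi]))
    simp [hm, h2]

lemma commute_t2 (σ : Perm (Fin l)) (ε : Fin l → Bool) (i : Fin l)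
    (h2 : σ (σ i) = i) (h3 : ε (σ i) = ε i) (hii : σ i ≠ i) :
    mk σ ε * (Equiv.swap (i, true) (σ i, true) * Equiv.swap (i, false) (σ i, false)) =
      (Equiv.swap (i, true) (σ i, true) * Equiv.swap (i, false) (σ i, false)) * mk σ ε := by
  set j := σ i with hj
  ext ⟨m, b⟩ : 1
  simp only [Equiv.Perm.mul_apply, mk_apply]
  by_cases hm : m = i
  · subst hm
    cases b <;> cases h : ε m <;>
      simp_all [Equiv.swap_apply_def, Prod.ext_iff]
  · by_cases hmj : m = j
    · subst hmj
      cases b <;> cases h : ε i <;>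
        simp_all [Equiv.swap_apply_def, Prod.ext_iff]
    · have hsi : σ m ≠ i := fun h => hmj (σ.injective (h.trans h2.symm))
      have hsj : σ m ≠ j := fun h => hm (σ.injective (h.trans hj))
      cases b <;> simp [Equiv.swap_apply_def, Prod.ext_iff, hm, hmj, hsi, hsj]


lemma noRefl_iff (σ : Perm (Fin l)) (ε : Fin l → Bool) :
    (∀ t ∈ reflB l, mk σ ε * t ≠ t * mk σ ε) ↔ GoodP (σ, ε) := by
  constructor
  · intro H
    constructor
    · intro i hfix
      exact H _ (Or.inl ⟨i, rfl⟩) (commute_t1 σ ε i hfix)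
    · intro i h2 h3
      by_cases hii : σ i = i
      · exact H _ (Or.inl ⟨i, rfl⟩) (commute_t1 σ ε i hii)
      · exact H _ (Or.inr (Or.inl ⟨i, σ i, Ne.symm hii, rfl⟩))
          (commute_t2 σ ε i h2 h3 hii)
  · rintro ⟨hder, h2c⟩ t ht hcomm
    have key : ∀ x, mk σ ε (t x) = t (mk σ ε x) := fun x => by
      rw [← Equiv.Perm.mul_apply, hcomm, Equiv.Perm.mul_apply]
    rcases ht with ⟨i, rfl⟩ | ⟨i, j, hij, rfl⟩ | ⟨i, j, hij, rfl⟩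
    · have h := key (i, true)
      simp [t1_apply, mk_apply, hder i] at h
    · by_cases h1 : σ i = j
      · by_cases hsj : σ j = i
        · have hne := h2c i (by rw [h1, hsj])
          rw [h1] at hne
          have h := key (i, true)
          simp [t2_apply, mk_apply, h1, hsj, Ne.symm hij] at h
          exact hne h
        · have h := key (j, true)
          simp [t2_apply, mk_apply, h1, hsj, hder j, Ne.symm hij] at h
          exact hder j h.1.symm
      · have h := key (i, true)
        simp [t2_apply, mk_apply, h1, hder i] at h
        exact hij h.1.symm
    · by_cases h1 : σ i = j
      · by_cases hsj : σ j = i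
        · have hne := h2c i (by rw [h1, hsj])
          rw [h1] at hne
          have h := key (i, true)
          simp [t3_apply i j hij, mk_apply, h1, hsj, Ne.symm hij] at h
          exact hne (by simpa using congrArg Bool.not h)
        · have h := key (j, true)
          simp [t3_apply i j hij, mk_apply, h1, hsj, hder j, Ne.symm hij] at h
          exact hder j h.1.symm
      · have h := key (i, true)
        simp [t3_apply i j hij, mk_apply, h1, hder i] at h
        exact hij h.1.symm



/-- number of "pairs" of an involution, counted by their larger element -/
def bcount (ι : Perm (Fin l)) : ℕ := #(univ.filter fun i => ι i < i)

def StrT (T : Finset (Fin l) × Perm (Fin l)) : Prop :=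
  (∀ i, T.2 (T.2 i) = i) ∧ ∀ i ∈ T.1, T.2 i = i

def SubS (T : Finset (Fin l) × Perm (Fin l)) (σ : Perm (Fin l)) : Prop :=
  (∀ i ∈ T.1, σ i = i) ∧ ∀ i, T.2 i ≠ i → σ i = T.2 i

def SubE (T : Finset (Fin l) × Perm (Fin l)) (ε : Fin l → Bool) : Prop :=
  ∀ i, T.2 i ≠ i → ε (T.2 i) = ε i

instance : DecidablePred (StrT (l := l)) := fun T => by unfold StrT; infer_instance
instance : ∀ T, DecidablePred (SubS (l := l) T) := fun T σ => by unfold SubS; infer_instance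
instance : ∀ T, DecidablePred (SubE (l := l) T) := fun T ε => by unfold SubE; infer_instance

lemma bcount_eq_shalf (ι : Perm (Fin l)) (h : ∀ i, ι (ι i) = i) :
    bcount ι = #(univ.filter fun x => x < ι x) := by
  refine Finset.card_nbij' (fun i => ι i) (fun x => ι x) ?_ ?_ ?_ ?_
  · intro a ha
    simp only [mem_coe, mem_filter, mem_univ, true_and] at ha ⊢
    rw [h a]; exact ha
  · intro a ha
    simp only [mem_coe, mem_filter, mem_univ, true_and] at ha ⊢
    rw [h a]; exact ha
  · intro a _; exact h a
  · intro a _; exact h a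

/-- the involution determined by a set of "smaller elements of 2-cycles" of σ -/
def iotaFun (σ : Perm (Fin l)) (S : Finset (Fin l)) : Fin l → Fin l :=
  fun i => if i ∈ S ∨ σ i ∈ S then σ i else i

def iotaPerm (σ : Perm (Fin l)) (S : Finset (Fin l)) : Perm (Fin l) :=
  if h : ∀ i, iotaFun σ S (iotaFun σ S i) = i then Function.Involutive.toPerm _ h else 1

lemma iota_involutive (σ : Perm (Fin l)) (S : Finset (Fin l))
    (hS : ∀ s ∈ S, σ (σ s) = s) : Function.Involutive (iotaFun σ S) := by
  intro i
  unfold iotaFun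
  by_cases hc : i ∈ S ∨ σ i ∈ S
  · rw [if_pos hc]
    rcases hc with hc | hc
    · rw [if_pos (Or.inr (by rw [hS i hc]; exact hc)), hS i hc]
    · have h2 : σ (σ i) = i := σ.injective (hS _ hc)
      rw [if_pos (Or.inl hc), h2]
  · rw [if_neg hc, if_neg hc]

lemma iotaPerm_apply (σ : Perm (Fin l)) (S : Finset (Fin l))
    (hS : ∀ s ∈ S, σ (σ s) = s) (i : Fin l) :
    iotaPerm σ S i = if i ∈ S ∨ σ i ∈ S then σ i else i := by
  rw [iotaPerm, dif_pos (show ∀ i, iotaFun σ S (iotaFun σ S i) = i from iota_involutive σ S hS)]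
  rfl


lemma iotaPerm_invol (σ : Perm (Fin l)) (S : Finset (Fin l))
    (hS : ∀ s ∈ S, σ (σ s) = s) (i : Fin l) :
    iotaPerm σ S (iotaPerm σ S i) = i := by
  rw [iotaPerm, dif_pos (show ∀ i, iotaFun σ S (iotaFun σ S i) = i from iota_involutive σ S hS)]
  exact iota_involutive σ S hS i

lemma pointwise (σ : Perm (Fin l)) (ε : Fin l → Bool) :
    ∑ T ∈ univ.filter (fun T => StrT T ∧ SubS T σ ∧ SubE T ε),
        (-1 : ℤ) ^ (T.1.card + bcount T.2)
      = if GoodP (σ, ε) then 1 else 0 := by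
  classical
  set Fx := univ.filter (fun i => σ i = i) with hFx
  set Bh := univ.filter (fun i : Fin l => σ (σ i) = i ∧ ε (σ i) = ε i ∧ i < σ i) with hBh
  have hBhmem : ∀ {x : Fin l}, x ∈ Bh ↔ (σ (σ x) = x ∧ ε (σ x) = ε x ∧ x < σ x) := by
    intro x; simp [hBh]
  have hFxmem : ∀ {x : Fin l}, x ∈ Fx ↔ σ x = x := by intro x; simp [hFx]
  have key : ∑ T ∈ univ.filter (fun T => StrT T ∧ SubS T σ ∧ SubE T ε),
        (-1 : ℤ) ^ (T.1.card + bcount T.2)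
      = ∑ P ∈ Fx.powerset ×ˢ Bh.powerset, (-1 : ℤ) ^ (P.1.card + P.2.card) := by
    refine Finset.sum_nbij' (fun T => (T.1, univ.filter (fun x => x < T.2 x)))
      (fun P => (P.1, iotaPerm σ P.2)) ?_ ?_ ?_ ?_ ?_
    · -- membership forward
      rintro ⟨F, ι⟩ hT
      rw [mem_filter] at hT
      obtain ⟨-, ⟨hinv, hfix⟩, ⟨hF, hι⟩, hε⟩ := hT
      rw [Finset.mem_product, Finset.mem_powerset, Finset.mem_powerset]
      constructor
      · intro i hi
        exact hFxmem.mpr (hF i hi)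
      · intro x hx
        rw [mem_filter] at hx
        obtain ⟨-, hlt⟩ := hx
        have hne : ι x ≠ x := ne_of_gt hlt
        have hσx : σ x = ι x := hι x hne
        have hne2 : ι (ι x) ≠ ι x := by rw [hinv x]; exact hne.symm
        have hσ2 : σ (ι x) = x := by rw [hι (ι x) hne2, hinv x]
        refine hBhmem.mpr ⟨by rw [hσx, hσ2], by rw [hσx]; exact hε x hne, by rw [hσx]; exact hlt⟩
    · -- membership backward
      rintro ⟨F, S⟩ hP
      rw [Finset.mem_product, Finset.mem_powerset, Finset.mem_powerset] at hP
      obtain ⟨hF, hS⟩ := hP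
      have hpair : ∀ s ∈ S, σ (σ s) = s := fun s hs => (hBhmem.mp (hS hs)).1
      have happ := iotaPerm_apply σ S hpair
      have hSne : ∀ s ∈ S, σ s ≠ s := fun s hs => ne_of_gt (hBhmem.mp (hS hs)).2.2
      rw [mem_filter]
      refine ⟨mem_univ _, ⟨iotaPerm_invol σ S hpair, ?_⟩, ⟨?_, ?_⟩, ?_⟩
      · -- fixes F
        intro i hi
        have hfix : σ i = i := hFxmem.mp (hF hi)
        rw [happ, if_neg]
        rintro (h | h)
        · exact hSne i h hfix
        · rw [hfix] at h; exact hSne i h hfix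
      · intro i hi
        exact hFxmem.mp (hF hi)
      · -- SubS second part
        intro i hne
        rw [happ] at hne ⊢
        by_cases hc : i ∈ S ∨ σ i ∈ S
        · rw [if_pos hc]
        · rw [if_neg hc] at hne; exact absurd rfl hne
      · -- SubE
        intro i hne
        rw [happ] at hne ⊢
        by_cases hc : i ∈ S ∨ σ i ∈ S
        · rw [if_pos hc]
          rcases hc with h | h
          · exact (hBhmem.mp (hS h)).2.1
          · have h1 : σ (σ (σ i)) = σ i := hpair _ h
            have h2 : σ (σ i) = i := σ.injective h1
            have h3 : ε (σ (σ i)) = ε (σ i) := (hBhmem.mp (hS h)).2.1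
            rw [h2] at h3
            exact h3.symm
        · rw [if_neg hc] at hne; exact absurd rfl hne
    · -- left inverse
      rintro ⟨F, ι⟩ hT
      rw [mem_filter] at hT
      obtain ⟨-, ⟨hinv, hfix⟩, ⟨hF, hι⟩, hε⟩ := hT
      have hpair : ∀ s ∈ univ.filter (fun x => x < ι x), σ (σ s) = s := by
        intro x hx
        rw [mem_filter] at hx
        have hne : ι x ≠ x := ne_of_gt hx.2
        have hσx : σ x = ι x := hι x hne
        have hne2 : ι (ι x) ≠ ι x := by rw [hinv x]; exact hne.symm
        rw [hσx, hι (ι x) hne2, hinv x]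
      refine Prod.ext rfl ?_
      refine Equiv.ext fun i => ?_
      rw [iotaPerm_apply σ _ hpair]
      rcases lt_trichotomy (ι i) i with hlt | heq | hgt
      · -- ι i < i : partner case
        have hne : ι i ≠ i := ne_of_lt hlt
        have hσi : σ i = ι i := hι i hne
        rw [if_pos (Or.inr (by rw [hσi]; simp only [mem_filter, mem_univ, true_and, hinv i]; exact hlt)), hσi]
      · -- fixed
        rw [if_neg, heq]
        rintro (h | h)
        · rw [mem_filter] at h; rw [heq] at h; exact lt_irrefl i h.2
        · rw [mem_filter] at h
          obtain ⟨-, hlt⟩ := h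
          set s := σ i with hs
          have hnes : ι s ≠ s := ne_of_gt hlt
          have hσs : σ s = ι s := hι s hnes
          have hsi : s ≠ i := by
            intro h'
            rw [h'] at hlt
            rw [heq] at hlt
            exact lt_irrefl i hlt
          -- σ i = s, σ (σ s) = s from pair membership
          have hps : σ (σ s) = s := hpair s (by rw [mem_filter]; exact ⟨mem_univ _, hlt⟩)
          have h1 : σ s = i := by
            apply σ.injective
            rw [hps, hs]
          have h2 : ι s = i := by rw [← hσs, h1]
          have h3 : ι i = s := by rw [← h2, hinv]
          rw [heq] at h3
          exact hsi h3.symm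
      · -- i < ι i
        have hne : ι i ≠ i := ne_of_gt hgt
        have hσi : σ i = ι i := hι i hne
        rw [if_pos (Or.inl (by simp only [mem_filter, mem_univ, true_and]; exact hgt)), hσi]
    · -- right inverse
      rintro ⟨F, S⟩ hP
      rw [Finset.mem_product, Finset.mem_powerset, Finset.mem_powerset] at hP
      obtain ⟨hF, hS⟩ := hP
      have hpair : ∀ s ∈ S, σ (σ s) = s := fun s hs => (hBhmem.mp (hS hs)).1
      have happ := iotaPerm_apply σ S hpair
      refine Prod.ext rfl ?_
      ext x
      simp only [mem_filter, mem_univ, true_and]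
      constructor
      · rintro hlt
        rw [happ] at hlt
        by_cases hc : x ∈ S ∨ σ x ∈ S
        · rw [if_pos hc] at hlt
          rcases hc with h | h
          · exact h
          · exfalso
            have := (hBhmem.mp (hS h)).2.2
            have h2 : σ (σ x) = x := σ.injective (hpair _ h)
            rw [h2] at this
            exact absurd hlt (not_lt.mpr (le_of_lt this))
        · rw [if_neg hc] at hlt; exact absurd hlt (lt_irrefl x)
      · intro hx
        rw [happ, if_pos (Or.inl hx)]
        exact (hBhmem.mp (hS hx)).2.2
    · -- sign compatibility
      rintro ⟨F, ι⟩ hT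
      rw [mem_filter] at hT
      rw [bcount_eq_shalf ι hT.2.1.1]
  rw [key, Finset.sum_product]
  simp_rw [pow_add]
  rw [← Finset.sum_mul_sum]
  rw [Finset.sum_powerset_neg_one_pow_card, Finset.sum_powerset_neg_one_pow_card]
  have hgood : GoodP (σ, ε) ↔ (Fx = ∅ ∧ Bh = ∅) := by
    constructor
    · rintro ⟨hd, h2⟩
      constructor
      · rw [Finset.filter_eq_empty_iff]
        intro i _
        exact hd i
      · rw [Finset.filter_eq_empty_iff]
        rintro i _ ⟨ha, hb, -⟩
        exact h2 i ha hb
    · rintro ⟨hFe, hBe⟩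
      rw [Finset.filter_eq_empty_iff] at hFe hBe
      constructor
      · intro i; exact hFe (mem_univ i)
      · intro i h2 hεeq
        have hne : σ i ≠ i := hFe (mem_univ i)
        rcases lt_or_gt_of_ne (Ne.symm hne) with hlt | hgt
        · exact hBe (mem_univ i) ⟨h2, hεeq, hlt⟩
        · refine hBe (mem_univ (σ i)) ⟨by rw [h2], ?_, ?_⟩
          · rw [h2]; exact hεeq.symm
          · rw [h2]; exact hgt
  split_ifs with h1 h2 h3 <;> simp_all [hgood]


def extS (T : Finset (Fin l) × Perm (Fin l)) : ℕ := #(univ.filter fun σ : Perm (Fin l) => SubS T σ)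
def extE (T : Finset (Fin l) × Perm (Fin l)) : ℕ := #(univ.filter fun ε : Fin l → Bool => SubE T ε)

lemma count_eq :
    ((univ.filter (GoodP (l := l))).card : ℤ)
      = ∑ T ∈ univ.filter (StrT (l := l)),
          (-1 : ℤ) ^ (T.1.card + bcount T.2) * (extS T * extE T) := by
  classical
  have h1 : ((univ.filter (GoodP (l := l))).card : ℤ)
      = ∑ p : Perm (Fin l) × (Fin l → Bool), if GoodP p then (1 : ℤ) else 0 := by
    rw [Finset.sum_boole]
  rw [h1]
  have h2 : ∀ p : Perm (Fin l) × (Fin l → Bool), (if GoodP p then (1 : ℤ) else 0)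
      = ∑ T ∈ univ.filter (fun T => StrT T ∧ SubS T p.1 ∧ SubE T p.2),
          (-1 : ℤ) ^ (T.1.card + bcount T.2) := by
    rintro ⟨σ, ε⟩
    exact (pointwise σ ε).symm
  simp_rw [h2]
  simp_rw [Finset.sum_filter]
  rw [Finset.sum_comm]
  refine Finset.sum_congr rfl fun T _ => ?_
  by_cases hT : StrT T
  · simp only [hT, true_and]
    rw [← Finset.sum_filter, Finset.sum_const]
    have hcard : #(univ.filter fun p : Perm (Fin l) × (Fin l → Bool) => SubS T p.1 ∧ SubE T p.2)
        = extS T * extE T := by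
      rw [← Finset.univ_product_univ, Finset.filter_product, Finset.card_product]
      rfl
    rw [hcard, nsmul_eq_mul]
    push_cast
    ring
  · simp only [hT, false_and, if_false, Finset.sum_const_zero]

lemma card_fixing (q : Fin l → Prop) [DecidablePred q] :
    #(univ.filter fun τ : Perm (Fin l) => ∀ i, q i → τ i = i)
      = (l - #(univ.filter q)).factorial := by
  rw [← Fintype.card_subtype]
  have e1 : {τ : Perm (Fin l) // ∀ i, q i → τ i = i} ≃ Perm {i : Fin l // ¬ q i} :=
    ((Equiv.Perm.subtypeEquivSubtypePerm (fun i => ¬ q i)).trans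
      (Equiv.subtypeEquivRight (fun f => by
        constructor
        · intro h a ha; exact h a (not_not.mpr ha)
        · intro h a ha; exact h a (not_not.mp ha)))).symm
  rw [Fintype.card_congr e1, Fintype.card_perm, Fintype.card_subtype_compl,
    Fintype.card_fin, Fintype.card_subtype]

lemma card_supp (ι : Perm (Fin l)) (hinv : ∀ i, ι (ι i) = i) :
    #(univ.filter fun i => ι i ≠ i) = 2 * bcount ι := by
  have hsplit : (univ.filter fun i => ι i ≠ i)
      = (univ.filter fun i => ι i < i) ∪ (univ.filter fun i => i < ι i) := by
    ext x
    simp only [mem_filter, mem_univ, true_and, mem_union]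
    constructor
    · intro h; exact lt_or_gt_of_ne h
    · rintro (h | h)
      · exact ne_of_lt h
      · exact ne_of_gt h
  rw [hsplit, Finset.card_union_of_disjoint, ← bcount_eq_shalf ι hinv, bcount, two_mul]
  rw [Finset.disjoint_left]
  intro a ha hb
  rw [mem_filter] at ha hb
  exact absurd (ha.2.trans hb.2) (lt_irrefl _)

lemma extS_eq (T : Finset (Fin l) × Perm (Fin l)) (hT : StrT T) :
    extS T = (l - (T.1.card + 2 * bcount T.2)).factorial := by
  classical
  obtain ⟨F, ι⟩ := T
  obtain ⟨hinv, hfix⟩ := hT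
  have hstep1 : extS (F, ι) = #(univ.filter fun σ : Perm (Fin l) =>
      ∀ i, (i ∈ F ∨ ι i ≠ i) → σ i = ι i) := by
    rw [extS]
    congr 1
    apply Finset.filter_congr
    intro σ _
    constructor
    · rintro ⟨hA, hB⟩ i (hi | hi)
      · rw [hA i hi, hfix i hi]
      · exact hB i hi
    · intro h
      constructor
      · intro i hi
        rw [h i (Or.inl hi), hfix i hi]
      · intro i hi
        exact h i (Or.inr hi)
  have hstep2 : #(univ.filter fun σ : Perm (Fin l) => ∀ i, (i ∈ F ∨ ι i ≠ i) → σ i = ι i)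
      = #(univ.filter fun τ : Perm (Fin l) => ∀ i, (i ∈ F ∨ ι i ≠ i) → τ i = i) := by
    refine Finset.card_nbij' (fun σ => ι * σ) (fun τ => ι * τ) ?_ ?_ ?_ ?_
    · intro σ hσ
      rw [mem_coe, mem_filter] at hσ ⊢
      refine ⟨mem_univ _, fun i hi => ?_⟩
      rw [Equiv.Perm.mul_apply, hσ.2 i hi, hinv]
    · intro τ hτ
      rw [mem_coe, mem_filter] at hτ ⊢
      refine ⟨mem_univ _, fun i hi => ?_⟩
      rw [Equiv.Perm.mul_apply, hτ.2 i hi]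
    · intro σ _
      refine Equiv.ext fun i => ?_
      simp [hinv]
    · intro τ _
      refine Equiv.ext fun i => ?_
      simp [hinv]
  have hq : #(univ.filter fun i => i ∈ F ∨ ι i ≠ i) = F.card + 2 * bcount ι := by
    rw [Finset.filter_or, Finset.card_union_of_disjoint, Finset.filter_univ_mem,
      card_supp ι hinv]
    rw [Finset.disjoint_left]
    intro a ha hb
    rw [mem_filter] at ha hb
    exact hb.2 (hfix a ha.2)
  rw [hstep1, hstep2, card_fixing, hq]

def epsEquiv (ι : Perm (Fin l)) (hinv : ∀ i, ι (ι i) = i) :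
    {ε : Fin l → Bool // ∀ i, ι i ≠ i → ε (ι i) = ε i} ≃ ({i : Fin l // ¬ (ι i < i)} → Bool) where
  toFun ε x := ε.1 x.1
  invFun η := ⟨fun i => if h : ι i < i then η ⟨ι i, by rw [hinv]; exact not_lt.mpr h.le⟩
      else η ⟨i, h⟩, by
    intro i hne
    dsimp only
    by_cases h : ι i < i
    · have h2 : ¬ (ι (ι i) < ι i) := by rw [hinv]; exact not_lt.mpr h.le
      rw [dif_neg h2, dif_pos h]
    · have h' : i < ι i := lt_of_le_of_ne (not_lt.mp h) (Ne.symm hne)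
      have h2 : ι (ι i) < ι i := by rw [hinv]; exact h'
      rw [dif_pos h2, dif_neg h]
      congr 1
      exact Subtype.ext (hinv i)⟩
  left_inv := by
    rintro ⟨ε, hε⟩
    refine Subtype.ext (funext fun i => ?_)
    by_cases h : ι i < i
    · simp only [dif_pos h]
      exact hε i (ne_of_lt h)
    · simp only [dif_neg h]
  right_inv := by
    intro η
    funext x
    obtain ⟨i, hi⟩ := x
    simp only [dif_neg hi]

lemma extE_eq (T : Finset (Fin l) × Perm (Fin l)) (hT : StrT T) :
    extE T = 2 ^ (l - bcount T.2) := by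
  classical
  obtain ⟨F, ι⟩ := T
  obtain ⟨hinv, -⟩ := hT
  rw [extE, ← Fintype.card_subtype]
  have : {ε : Fin l → Bool // SubE (F, ι) ε} ≃ ({i : Fin l // ¬ (ι i < i)} → Bool) :=
    epsEquiv ι hinv
  rw [Fintype.card_congr this, Fintype.card_fun, Fintype.card_bool,
    Fintype.card_subtype_compl, Fintype.card_fin, Fintype.card_subtype]
  rfl


lemma der_identity (r : ℕ) :
    ∑ a ∈ range (r + 1), (-1 : ℤ) ^ a * (r.choose a * (r - a).factorial) =
      numDerangements r := by
  rw [numDerangements_sum]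
  refine Finset.sum_congr rfl fun a ha => ?_
  rw [mem_range] at ha
  have hle : a ≤ r := by omega
  have hasc : (a + 1).ascFactorial (r - a) = (r - a).factorial * r.choose a := by
    rw [Nat.ascFactorial_eq_factorial_mul_choose, show a + (r - a) = r by omega,
      Nat.choose_symm hle]
  rw [hasc]
  push_cast
  ring

/-- number of involutions of `Fin l` with `b` two-cycles -/
def J (l b : ℕ) : ℕ :=
  #(univ.filter fun ι : Perm (Fin l) => (∀ i, ι (ι i) = i) ∧ bcount ι = b)

lemma fixcard (ι : Perm (Fin l)) (hinv : ∀ i, ι (ι i) = i) :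
    #(univ.filter fun i => ι i = i) = l - 2 * bcount ι := by
  have h1 := Finset.card_filter_add_card_filter_not
    (s := (univ : Finset (Fin l))) (p := fun i => ι i = i)
  have h2 : #(univ.filter fun i => ¬ ι i = i) = 2 * bcount ι := card_supp ι hinv
  have h3 : #(univ : Finset (Fin l)) = l := by simp
  omega

lemma strT_sum :
    (∑ T ∈ univ.filter (StrT (l := l)),
        (-1 : ℤ) ^ (T.1.card + bcount T.2) * (extS T * extE T))
      = ∑ ι ∈ univ.filter (fun ι : Perm (Fin l) => ∀ i, ι (ι i) = i),
          (-1 : ℤ) ^ (bcount ι) * 2 ^ (l - bcount ι) *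
            numDerangements (l - 2 * bcount ι) := by
  classical
  rw [Finset.sum_finset_product_right (univ.filter (StrT (l := l)))
    (univ.filter (fun ι : Perm (Fin l) => ∀ i, ι (ι i) = i))
    (fun ι => (univ.filter (fun i => ι i = i)).powerset)
    (by
      rintro ⟨F, ι⟩
      simp only [mem_filter, mem_univ, true_and, Finset.mem_powerset, StrT]
      constructor
      · rintro ⟨hinv, hfix⟩
        exact ⟨hinv, fun i hi => by simp [hfix i hi]⟩
      · rintro ⟨hinv, hsub⟩
        exact ⟨hinv, fun i hi => by simpa using (mem_filter.mp (hsub hi)).2⟩)]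
  refine Finset.sum_congr rfl fun ι hι => ?_
  rw [mem_filter] at hι
  have hinv := hι.2
  have hfc : #(univ.filter fun i => ι i = i) = l - 2 * bcount ι := fixcard ι hinv
  have step1 : (∑ F ∈ (univ.filter fun i => ι i = i).powerset,
      (-1 : ℤ) ^ (#F + bcount ι) * (extS (F, ι) * extE (F, ι)))
      = ∑ F ∈ (univ.filter fun i => ι i = i).powerset,
        (-1 : ℤ) ^ (#F + bcount ι) *
          ((l - 2 * bcount ι - #F).factorial * 2 ^ (l - bcount ι)) := by
    refine Finset.sum_congr rfl fun F hF => ?_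
    rw [Finset.mem_powerset] at hF
    have hstr : StrT (F, ι) :=
      ⟨hinv, fun i hi => by simpa using (mem_filter.mp (hF hi)).2⟩
    rw [extS_eq _ hstr, extE_eq _ hstr]
    dsimp only
    have harith : l - (#F + 2 * bcount ι) = l - 2 * bcount ι - #F := by
      omega
    rw [harith]
    push_cast
    ring
  rw [step1, Finset.sum_powerset, hfc]
  have step2 : ∀ j ∈ range (l - 2 * bcount ι + 1),
      (∑ F ∈ Finset.powersetCard j (univ.filter fun i => ι i = i),
        (-1 : ℤ) ^ (#F + bcount ι) *
          ((l - 2 * bcount ι - #F).factorial * 2 ^ (l - bcount ι)))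
      = ((l - 2 * bcount ι).choose j) *
          ((-1 : ℤ) ^ (j + bcount ι) *
            ((l - 2 * bcount ι - j).factorial * 2 ^ (l - bcount ι))) := by
    intro j hj
    have : ∀ F ∈ Finset.powersetCard j (univ.filter fun i => ι i = i),
        (-1 : ℤ) ^ (#F + bcount ι) *
          ((l - 2 * bcount ι - #F).factorial * 2 ^ (l - bcount ι))
        = (-1 : ℤ) ^ (j + bcount ι) *
          ((l - 2 * bcount ι - j).factorial * 2 ^ (l - bcount ι)) := by
      intro F hF
      rw [(Finset.mem_powersetCard.mp hF).2]
    rw [Finset.sum_congr rfl this, Finset.sum_const, Finset.card_powersetCard, hfc,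
      nsmul_eq_mul]
  rw [Finset.sum_congr rfl step2]
  have step3 : (∑ j ∈ range (l - 2 * bcount ι + 1),
      ((l - 2 * bcount ι).choose j : ℤ) *
        ((-1 : ℤ) ^ (j + bcount ι) *
          ((l - 2 * bcount ι - j).factorial * 2 ^ (l - bcount ι))))
      = ((-1 : ℤ) ^ (bcount ι) * 2 ^ (l - bcount ι)) *
          ∑ j ∈ range (l - 2 * bcount ι + 1),
            (-1 : ℤ) ^ j * (((l - 2 * bcount ι).choose j) *
              ((l - 2 * bcount ι - j).factorial)) := by
    rw [Finset.mul_sum]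
    refine Finset.sum_congr rfl fun j _ => ?_
    rw [pow_add]
    push_cast
    ring
  rw [step3, der_identity]

lemma count_formula :
    ((univ.filter (GoodP (l := l))).card : ℤ)
      = ∑ b ∈ range (l + 1),
          (J l b : ℤ) * ((-1) ^ b * 2 ^ (l - b) * numDerangements (l - 2 * b)) := by
  classical
  rw [count_eq, strT_sum]
  rw [← Finset.sum_fiberwise_of_maps_to (g := bcount) (t := range (l + 1))
    (fun ι hι => by
      rw [mem_range]
      have : bcount ι ≤ l := le_trans (Finset.card_filter_le _ _) (by simp)
      omega)]
  refine Finset.sum_congr rfl fun b hb => ?_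
  have : ∀ ι ∈ Finset.filter (fun ι => bcount ι = b)
      (univ.filter fun ι : Perm (Fin l) => ∀ i, ι (ι i) = i),
      (-1 : ℤ) ^ (bcount ι) * 2 ^ (l - bcount ι) * numDerangements (l - 2 * bcount ι)
      = (-1 : ℤ) ^ b * 2 ^ (l - b) * numDerangements (l - 2 * b) := by
    intro ι hι
    rw [mem_filter] at hι
    rw [hι.2]
  rw [Finset.sum_congr rfl this, Finset.sum_const, nsmul_eq_mul]
  congr 2
  rw [J, Finset.filter_filter]


def negB (b : ℕ) : Perm (Fin b × Bool) :=
  Equiv.prodCongr (Equiv.refl _) (Function.Involutive.toPerm not (fun x => Bool.not_not x))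

noncomputable def Phi {b : ℕ} (u : Fin b × Bool ↪ Fin l) : Perm (Fin l) :=
  (negB b).viaEmbedding u

lemma Phi_apply_u {b : ℕ} (u : Fin b × Bool ↪ Fin l) (x : Fin b × Bool) :
    Phi u (u x) = u (x.1, !x.2) := by
  rw [Phi, Equiv.Perm.viaEmbedding_apply]
  rfl

lemma Phi_apply_nmem {b : ℕ} (u : Fin b × Bool ↪ Fin l) {x : Fin l}
    (hx : x ∉ Set.range u) : Phi u x = x :=
  Equiv.Perm.viaEmbedding_apply_of_notMem _ _ _ hx

lemma Phi_invol {b : ℕ} (u : Fin b × Bool ↪ Fin l) (x : Fin l) :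
    Phi u (Phi u x) = x := by
  by_cases hx : x ∈ Set.range u
  · obtain ⟨a, rfl⟩ := hx
    rw [Phi_apply_u, Phi_apply_u]
    simp
  · rw [Phi_apply_nmem u hx, Phi_apply_nmem u hx]

lemma Phi_ne_mem {b : ℕ} (u : Fin b × Bool ↪ Fin l) (x : Fin l) (h : Phi u x ≠ x) :
    x ∈ Set.range u := by
  by_contra hx
  exact h (Phi_apply_nmem u hx)

lemma pair_ne {b : ℕ} (u : Fin b × Bool ↪ Fin l) (k : Fin b) :
    u (k, true) ≠ u (k, false) := by
  intro h
  have := u.injective h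
  simp at this

lemma Phi_bcount {b : ℕ} (u : Fin b × Bool ↪ Fin l) : bcount (Phi u) = b := by
  have : bcount (Phi u) = #(univ : Finset (Fin b)) := by
    refine (Finset.card_bij (fun k _ => max (u (k, true)) (u (k, false))) ?_ ?_ ?_).symm
    · intro k _
      simp only [mem_filter, mem_univ, true_and]
      rcases lt_or_gt_of_ne (pair_ne u k) with h | h
      · rw [max_eq_right h.le]
        have := Phi_apply_u u (k, false)
        simp only [Bool.not_false] at this
        rw [this]
        exact h
      · rw [max_eq_left h.le]
        have := Phi_apply_u u (k, true)
        simp only [Bool.not_true] at this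
        rw [this]
        exact h
    · intro k _ k' _ h
      rcases max_cases (u (k, true)) (u (k, false)) with ⟨h1, -⟩ | ⟨h1, -⟩ <;>
        rcases max_cases (u (k', true)) (u (k', false)) with ⟨h2, -⟩ | ⟨h2, -⟩ <;>
          rw [h1, h2] at h <;> exact congrArg Prod.fst (u.injective h)
    · intro x hx
      rw [mem_filter] at hx
      have hne : Phi u x ≠ x := ne_of_lt hx.2
      obtain ⟨⟨k, e⟩, rfl⟩ := Phi_ne_mem u x hne
      refine ⟨k, mem_univ k, ?_⟩
      have hp := Phi_apply_u u (k, e)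
      cases e
      · rw [hp] at hx
        simp only [Bool.not_false] at hx
        exact max_eq_right hx.2.le
      · rw [hp] at hx
        simp only [Bool.not_true] at hx
        exact max_eq_left hx.2.le
  rw [this, Finset.card_univ, Fintype.card_fin]


section fiber
variable {b : ℕ} {ι : Perm (Fin l)}

lemma theta_pf (u : Fin b × Bool ↪ Fin l) (hu : Phi u = ι) (k : Fin b) :
    min (u (k, true)) (u (k, false)) < ι (min (u (k, true)) (u (k, false))) := by
  rcases lt_or_gt_of_ne (pair_ne u k) with h | h
  · rw [min_eq_left h.le, ← hu]
    have h2 := Phi_apply_u u (k, true)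
    simp only [Bool.not_true] at h2
    rw [h2]
    exact h
  · rw [min_eq_right h.le, ← hu]
    have h2 := Phi_apply_u u (k, false)
    simp only [Bool.not_false] at h2
    rw [h2]
    exact h

noncomputable def thetaFun (u : Fin b × Bool ↪ Fin l) (hu : Phi u = ι) :
    Fin b → {x : Fin l // x < ι x} :=
  fun k => ⟨min (u (k, true)) (u (k, false)), theta_pf u hu k⟩

lemma theta_bij (u : Fin b × Bool ↪ Fin l) (hu : Phi u = ι) :
    Function.Bijective (thetaFun u hu) := by
  constructor
  · intro k k' h
    have h2 : min (u (k, true)) (u (k, false)) = min (u (k', true)) (u (k', false)) :=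
      congrArg Subtype.val h
    rcases min_cases (u (k, true)) (u (k, false)) with ⟨h1, -⟩ | ⟨h1, -⟩ <;>
      rcases min_cases (u (k', true)) (u (k', false)) with ⟨h3, -⟩ | ⟨h3, -⟩ <;>
        rw [h1, h3] at h2 <;> exact congrArg Prod.fst (u.injective h2)
  · rintro ⟨x, hx⟩
    have hne : Phi u x ≠ x := by rw [hu]; exact ne_of_gt hx
    obtain ⟨⟨k, e⟩, rfl⟩ := Phi_ne_mem u x hne
    refine ⟨k, Subtype.ext ?_⟩
    have hp := Phi_apply_u u (k, e)
    rw [hu] at hp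
    cases e
    · simp only [Bool.not_false] at hp
      show min (u (k, true)) (u (k, false)) = u (k, false)
      rw [hp] at hx
      exact min_eq_right hx.le
    · simp only [Bool.not_true] at hp
      show min (u (k, true)) (u (k, false)) = u (k, true)
      rw [hp] at hx
      exact min_eq_left hx.le

def sFun (u : Fin b × Bool ↪ Fin l) : Fin b → Bool :=
  fun k => decide (u (k, false) < u (k, true))

def uFun (θ : Fin b ≃ {x : Fin l // x < ι x}) (s : Fin b → Bool) : Fin b × Bool → Fin l :=
  fun x => if x.2 = s x.1 then ι (θ x.1).1 else (θ x.1).1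

lemma uFun_inj (hinv : ∀ i, ι (ι i) = i) (θ : Fin b ≃ {x : Fin l // x < ι x})
    (s : Fin b → Bool) : Function.Injective (uFun θ s) := by
  rintro ⟨k, e⟩ ⟨k', e'⟩ h
  unfold uFun at h
  dsimp only at h
  have hθ : ∀ m : Fin b, (θ m).1 < ι (θ m).1 := fun m => (θ m).2
  by_cases he : e = s k <;> by_cases he' : e' = s k'
  · rw [if_pos he, if_pos he'] at h
    have : (θ k).1 = (θ k').1 := ι.injective h
    have hk : k = k' := θ.injective (Subtype.ext this)
    subst hk
    rw [he, he']
  · rw [if_pos he, if_neg he'] at h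
    exfalso
    have h1 : (θ k).1 < ι (θ k).1 := hθ k
    have h2 : (θ k').1 < ι (θ k').1 := hθ k'
    rw [← h, hinv] at h2
    exact absurd (h1.trans (h ▸ h2)) (lt_irrefl _)
  · rw [if_neg he, if_pos he'] at h
    exfalso
    have h1 : (θ k).1 < ι (θ k).1 := hθ k
    have h2 : (θ k').1 < ι (θ k').1 := hθ k'
    rw [h, hinv] at h1
    exact absurd (h2.trans (h ▸ h1)) (lt_irrefl _)
  · rw [if_neg he, if_neg he'] at h
    have hk : k = k' := θ.injective (Subtype.ext h)
    subst hk
    have : e = e' := by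
      cases e <;> cases e' <;> simp_all <;> rfl
    rw [this]

noncomputable def uEmb (hinv : ∀ i, ι (ι i) = i) (θ : Fin b ≃ {x : Fin l // x < ι x})
    (s : Fin b → Bool) : Fin b × Bool ↪ Fin l :=
  ⟨uFun θ s, uFun_inj hinv θ s⟩

lemma Phi_uEmb (hinv : ∀ i, ι (ι i) = i) (θ : Fin b ≃ {x : Fin l // x < ι x})
    (s : Fin b → Bool) : Phi (uEmb hinv θ s) = ι := by
  refine Equiv.ext fun x => ?_
  by_cases hx : x ∈ Set.range (uEmb hinv θ s)
  · obtain ⟨⟨k, e⟩, rfl⟩ := hx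
    rw [Phi_apply_u]
    show uFun θ s (k, !e) = ι (uFun θ s (k, e))
    unfold uFun
    dsimp only
    by_cases he : e = s k
    · rw [if_pos he, if_neg (by rw [he]; cases s k <;> simp), hinv]
    · rw [if_neg he, if_pos (by cases e <;> cases hsk : s k <;> simp_all)]
  · rw [Phi_apply_nmem _ hx]
    by_contra hne
    have hιx : ι x ≠ x := fun h => hne h.symm
    have hmem : x ∈ Set.range (uEmb hinv θ s) := by
      rcases lt_or_gt_of_ne hιx with hlt | hgt
      · -- ι x < x, so ι x ∈ L and x = ι (ι x)
        have hL : ι x < ι (ι x) := by rw [hinv]; exact hlt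
        obtain ⟨k, hk⟩ := θ.surjective ⟨ι x, hL⟩
        refine ⟨(k, s k), ?_⟩
        show uFun θ s (k, s k) = x
        unfold uFun
        dsimp only
        rw [if_pos rfl, hk]
        exact hinv x
      · -- x < ι x so x ∈ L
        obtain ⟨k, hk⟩ := θ.surjective ⟨x, hgt⟩
        refine ⟨(k, !s k), ?_⟩
        show uFun θ s (k, !s k) = x
        unfold uFun
        dsimp only
        rw [if_neg (by cases s k <;> simp), hk]
    exact hx hmem

noncomputable def fiberEquiv (hinv : ∀ i, ι (ι i) = i) :
    {u : Fin b × Bool ↪ Fin l // Phi u = ι}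
      ≃ ((Fin b ≃ {x : Fin l // x < ι x}) × (Fin b → Bool)) where
  toFun p := (Equiv.ofBijective _ (theta_bij p.1 p.2), sFun p.1)
  invFun q := ⟨uEmb hinv q.1 q.2, Phi_uEmb hinv q.1 q.2⟩
  left_inv := by
    rintro ⟨u, hu⟩
    refine Subtype.ext (Function.Embedding.ext fun x => ?_)
    obtain ⟨k, e⟩ := x
    show uFun (Equiv.ofBijective _ (theta_bij u hu)) (sFun u) (k, e) = u (k, e)
    unfold uFun sFun
    dsimp only [Equiv.ofBijective_apply]
    show (if e = decide (u (k, false) < u (k, true)) then ι (thetaFun u hu k).1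
      else (thetaFun u hu k).1) = u (k, e)
    unfold thetaFun
    dsimp only
    rcases lt_or_gt_of_ne (pair_ne u k) with h | h
    · -- u (k,true) < u (k,false) : larger at false, s = false
      rw [min_eq_left h.le]
      have hp := Phi_apply_u u (k, true)
      simp only [Bool.not_true] at hp
      rw [hu] at hp
      have hs : decide (u (k, false) < u (k, true)) = false := by
        simp [not_lt.mpr h.le]
      rw [hs]
      cases e
      · simp only [if_pos rfl]
        exact hp
      · simp only [if_neg (by simp : ¬ (true = false))]
    · -- u (k,false) < u (k,true)
      rw [min_eq_right h.le]
      have hp := Phi_apply_u u (k, false)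
      simp only [Bool.not_false] at hp
      rw [hu] at hp
      have hs : decide (u (k, false) < u (k, true)) = true := by simp [h]
      rw [hs]
      cases e
      · simp only [if_neg (by simp : ¬ (false = true))]
      · simp only [if_pos rfl]
        exact hp
  right_inv := by
    rintro ⟨θ, s⟩
    have hθ : ∀ m : Fin b, (θ m).1 < ι (θ m).1 := fun m => (θ m).2
    have happ : ∀ (k : Fin b) (e : Bool),
        uEmb hinv θ s (k, e) = if e = s k then ι (θ k).1 else (θ k).1 := fun k e => rfl
    refine Prod.ext ?_ ?_
    · refine Equiv.ext fun k => ?_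
      dsimp only [Equiv.ofBijective_apply]
      refine Subtype.ext ?_
      show min (uEmb hinv θ s (k, true)) (uEmb hinv θ s (k, false)) = (θ k).1
      rw [happ, happ]
      cases hsk : s k
      · rw [if_neg (by simp [hsk]), if_pos (by simp [hsk])]
        exact min_eq_left (hθ k).le
      · rw [if_pos (by simp [hsk]), if_neg (by simp [hsk])]
        exact min_eq_right (hθ k).le
    · funext k
      show sFun (uEmb hinv θ s) k = s k
      unfold sFun
      rw [happ, happ]
      cases hsk : s k
      · rw [if_pos (by simp [hsk]), if_neg (by simp [hsk])]
        simp [not_lt.mpr (hθ k).le]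
      · rw [if_neg (by simp [hsk]), if_pos (by simp [hsk])]
        simp [hθ k]

lemma card_L (hinv : ∀ i, ι (ι i) = i) (hb : bcount ι = b) :
    Fintype.card {x : Fin l // x < ι x} = b := by
  rw [Fintype.card_subtype, ← bcount_eq_shalf ι hinv, hb]

lemma fiber_card (hinv : ∀ i, ι (ι i) = i) (hb : bcount ι = b) :
    #(univ.filter (fun u : Fin b × Bool ↪ Fin l => Phi u = ι))
      = b.factorial * 2 ^ b := by
  rw [← Fintype.card_subtype, Fintype.card_congr (fiberEquiv hinv), Fintype.card_prod,
    Fintype.card_equiv ((Fintype.equivFinOfCardEq (card_L hinv hb)).symm),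
    Fintype.card_fun, Fintype.card_bool, Fintype.card_fin]

end fiber

lemma J_count (b : ℕ) : J l b * (b.factorial * 2 ^ b) = l.descFactorial (2 * b) := by
  classical
  have h1 : Fintype.card (Fin b × Bool ↪ Fin l) = l.descFactorial (2 * b) := by
    rw [Fintype.card_embedding_eq, Fintype.card_prod, Fintype.card_bool, Fintype.card_fin,
      Fintype.card_fin, mul_comm b 2]
  rw [← h1, ← Finset.card_univ,
    Finset.card_eq_sum_card_fiberwise (f := Phi)
      (t := univ.filter (fun ι : Perm (Fin l) => (∀ i, ι (ι i) = i) ∧ bcount ι = b))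
      (fun u _ => by rw [mem_coe, mem_filter]; exact ⟨mem_univ _, Phi_invol u, Phi_bcount u⟩),
    Finset.sum_congr rfl
      (fun ι hι => fiber_card (mem_filter.mp hι).2.1 (mem_filter.mp hι).2.2),
    Finset.sum_const, nsmul_eq_mul]
  rfl


open Filter in
noncomputable def fterm (l b : ℕ) : ℝ :=
  if 2 * b ≤ l then
    (-1/4 : ℝ) ^ b / b.factorial *
      (numDerangements (l - 2 * b) / (l - 2 * b).factorial)
  else 0

lemma J_zero {b : ℕ} (h : l < 2 * b) : J l b = 0 := by
  have h1 := J_count (l := l) b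
  rw [Nat.descFactorial_eq_zero_iff_lt.mpr h] at h1
  have h2 : b.factorial * 2 ^ b ≠ 0 := by positivity
  exact (Nat.mul_eq_zero.mp h1).resolve_right h2

lemma ratio_eq (l : ℕ) :
    ((univ.filter (GoodP (l := l))).card : ℝ) / ((2 ^ l * l.factorial : ℕ) : ℝ)
      = ∑ b ∈ range (l + 1), fterm l b := by
  have hcf := count_formula (l := l)
  have hcast : ((univ.filter (GoodP (l := l))).card : ℝ)
      = ∑ b ∈ range (l + 1),
          (J l b : ℝ) * ((-1) ^ b * 2 ^ (l - b) * (numDerangements (l - 2 * b) : ℝ)) := by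
    exact_mod_cast congrArg (fun z : ℤ => (z : ℝ)) hcf
  rw [hcast, Finset.sum_div]
  refine Finset.sum_congr rfl fun b hb => ?_
  by_cases h2b : 2 * b ≤ l
  · have hJnat : J l b * (b.factorial * 2 ^ b) * (l - 2 * b).factorial = l.factorial := by
      rw [J_count, ← Nat.factorial_mul_descFactorial h2b, mul_comm]
    have hJ : (J l b : ℝ) * ((b.factorial * 2 ^ b) * (l - 2 * b).factorial) = l.factorial := by
      rw [← mul_assoc]
      exact_mod_cast hJnat
    rw [fterm, if_pos h2b]
    have hfb : (b.factorial : ℝ) ≠ 0 := Nat.cast_ne_zero.mpr (Nat.factorial_ne_zero _)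
    have hfl : ((l - 2 * b).factorial : ℝ) ≠ 0 := Nat.cast_ne_zero.mpr (Nat.factorial_ne_zero _)
    have h2 : (2 : ℝ) ^ (l - b) * 2 ^ b = 2 ^ l := by
      rw [← pow_add]
      congr 1
      omega
    have hJR : (J l b : ℝ) = l.factorial / ((b.factorial * 2 ^ b) * (l - 2 * b).factorial) := by
      rw [eq_div_iff (by positivity)]
      exact hJ
    rw [hJR]
    push_cast
    rw [div_pow, neg_pow (1:ℝ)]
    have h4 : (4 : ℝ) ^ b = 2 ^ b * 2 ^ b := by
      rw [← mul_pow]; norm_num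
    field_simp
    rw [h4]
    linear_combination ((numDerangements (l - 2*b) : ℝ) * 2^b) * h2
  · rw [fterm, if_neg h2b, J_zero (by omega)]
    simp


open Filter Topology in
lemma numDerangements_le (m : ℕ) : numDerangements m ≤ m.factorial := by
  classical
  rw [← card_derangements_fin_eq_numDerangements (n := m)]
  calc Fintype.card (derangements (Fin m)) ≤ Fintype.card (Perm (Fin m)) :=
        Fintype.card_le_of_injective Subtype.val Subtype.val_injective
    _ = m.factorial := by rw [Fintype.card_perm, Fintype.card_fin]

open Filter Topology in
lemma tendsto_sum_fterm :
    Tendsto (fun l => ∑ b ∈ range (l + 1), fterm l b) atTop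
      (𝓝 (Real.exp (-(5/4)))) := by
  have hsum_eq : ∀ l, ∑ b ∈ range (l + 1), fterm l b = ∑' b, fterm l b := by
    intro l
    refine (tsum_eq_sum fun b hb => ?_).symm
    rw [mem_range, not_lt] at hb
    rw [fterm, if_neg (by omega)]
  simp_rw [hsum_eq]
  have key : Tendsto (fun l => ∑' b, fterm l b) atTop
      (𝓝 (∑' b, (-1/4 : ℝ) ^ b / b.factorial * Real.exp (-1))) := by
    refine tendsto_tsum_of_dominated_convergence
      (bound := fun b => (1/4 : ℝ) ^ b / b.factorial) ?_ ?_ ?_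
    · exact Real.summable_pow_div_factorial (1/4)
    · intro b
      have h1 : Tendsto (fun l : ℕ => (numDerangements (l - 2 * b) : ℝ) /
          (l - 2 * b).factorial) atTop (𝓝 (Real.exp (-1))) :=
        numDerangements_tendsto_inv_e.comp (tendsto_sub_atTop_nat (2 * b))
      have h2 := h1.const_mul ((-1/4 : ℝ) ^ b / b.factorial)
      refine h2.congr' ?_
      filter_upwards [eventually_ge_atTop (2 * b)] with l hl
      rw [fterm, if_pos hl]
    · refine Eventually.of_forall fun l => fun b => ?_
      rw [Real.norm_eq_abs, fterm]
      split_ifs with h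
      · rw [abs_mul, abs_div, abs_div, abs_pow]
        have hD : |(numDerangements (l - 2 * b) : ℝ)| / |((l - 2 * b).factorial : ℝ)| ≤ 1 := by
          rw [abs_of_nonneg (by positivity), abs_of_nonneg (by positivity)]
          rw [div_le_one (by positivity)]
          exact_mod_cast numDerangements_le (l - 2 * b)
        have hb : |(-1/4 : ℝ)| = 1/4 := by norm_num
        rw [hb, abs_of_nonneg (show (0:ℝ) ≤ (b.factorial : ℝ) by positivity)]
        calc (1/4 : ℝ)^b / b.factorial * (|(numDerangements (l - 2*b) : ℝ)| / |((l - 2*b).factorial : ℝ)|)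
            ≤ (1/4 : ℝ)^b / b.factorial * 1 := by
              refine mul_le_mul_of_nonneg_left hD (by positivity)
          _ = (1/4 : ℝ)^b / b.factorial := by ring
      · simp
        positivity
  have hval : (∑' b, (-1/4 : ℝ) ^ b / b.factorial * Real.exp (-1))
      = Real.exp (-(5/4)) := by
    rw [tsum_mul_right]
    have hexp : (∑' b, (-1/4 : ℝ) ^ b / b.factorial) = Real.exp (-1/4) := by
      rw [Real.exp_eq_exp_ℝ]
      exact (NormedSpace.expSeries_div_hasSum_exp (-1/4 : ℝ)).tsum_eq
    rw [hexp, ← Real.exp_add]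
    norm_num
  rw [hval] at key
  exact key


lemma card_good (l : ℕ) :
    Nat.card {w : WB l // ∀ t ∈ reflB l,
        (w : Equiv.Perm (Fin l × Bool)) * t ≠ t * (w : Equiv.Perm (Fin l × Bool))}
      = #(univ.filter (GoodP (l := l))) := by
  classical
  have h : ∀ p : Perm (Fin l) × (Fin l → Bool),
      GoodP p ↔ (∀ t ∈ reflB l,
        ((modelEquiv p : WB l) : Equiv.Perm (Fin l × Bool)) * t
          ≠ t * ((modelEquiv p : WB l) : Equiv.Perm (Fin l × Bool))) := by
    rintro ⟨σ, ε⟩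
    exact (noRefl_iff σ ε).symm
  have e2 : {p : Perm (Fin l) × (Fin l → Bool) // GoodP p}
      ≃ {w : WB l // ∀ t ∈ reflB l,
        (w : Equiv.Perm (Fin l × Bool)) * t ≠ t * (w : Equiv.Perm (Fin l × Bool))} :=
    Equiv.subtypeEquiv modelEquiv h
  rw [← Nat.card_congr e2, Nat.card_eq_fintype_card, Fintype.card_subtype]

end Stmt9

/-- In `W(B_ℓ)`, the proportion of elements commuting with no reflection tends
to `e^{-5/4}` as `ℓ → ∞`. -/
theorem stmt9 :
    Filter.Tendsto (fun l : ℕ =>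
      (Nat.card {w : WB l // ∀ t ∈ reflB l,
          (w : Equiv.Perm (Fin l × Bool)) * t ≠ t * (w : Equiv.Perm (Fin l × Bool))} : ℝ)
        / (Nat.card (WB l) : ℝ))
      Filter.atTop (nhds (Real.exp (-(5 / 4)))) := by

  have heq : ∀ l : ℕ,
      (∑ b ∈ Finset.range (l + 1), Stmt9.fterm l b)
      = (Nat.card {w : WB l // ∀ t ∈ reflB l,
          (w : Equiv.Perm (Fin l × Bool)) * t ≠ t * (w : Equiv.Perm (Fin l × Bool))} : ℝ)
        / (Nat.card (WB l) : ℝ) := by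
    intro l
    rw [Stmt9.card_good, Stmt9.card_WB]
    exact (Stmt9.ratio_eq l).symm
  exact Filter.Tendsto.congr heq Stmt9.tendsto_sum_fterm
end

section
/- In the symmetric group Sym_{ℓ+1} with ℓ ≥ 1, viewed as the Weyl group of type A_ℓ acting on the roots e_i − e_j (i ≠ j), let w be the Coxeter element (1,2,…,ℓ+1). For any root α = e_i − e_j, if m is a positive integer such that α·w^m is a linear combination of α, α·w, …, α·w^{m−1}, then m ≥ (ℓ+1)/2. -/
open Fin.NatCast Fin.CommRing

/-- In type `A_ℓ` with Coxeter element `w = (1,2,…,ℓ+1)`, if `α·w^m` is a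
linear combination of `α, α·w, …, α·w^{m−1}` for a root `α = e_i − e_j`, then
`m ≥ (ℓ+1)/2`. -/
theorem stmt10 (l : ℕ) (hl : 1 ≤ l) (i j : Fin (l + 1)) (hij : i ≠ j)
    (rt : Fin (l + 1) → Fin (l + 1) → (Fin (l + 1) → ℝ))
    (hrt : ∀ a b, rt a b =
      fun t => (if t = a then (1 : ℝ) else 0) - (if t = b then (1 : ℝ) else 0))
    (m : ℕ) (hm : 0 < m)
    (hdep : rt (((finRotate (l + 1)) ^ m) i) (((finRotate (l + 1)) ^ m) j) ∈
      Submodule.span ℝ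
        {v | ∃ t : ℕ, t < m ∧
          v = rt (((finRotate (l + 1)) ^ t) i) (((finRotate (l + 1)) ^ t) j)}) :
    ((l : ℝ) + 1) / 2 ≤ (m : ℝ) := by
  classical
  by_contra hcon
  push_neg at hcon
  have hmn : 2 * m < l + 1 := by
    have h2 : (2 * m : ℝ) < (l : ℝ) + 1 := by linarith
    exact_mod_cast h2
  have hmltn : m < l + 1 := by omega
  -- rotation powers
  have hrot : ∀ (t : ℕ) (x : Fin (l + 1)),
      ((finRotate (l + 1)) ^ t) x = x + (t : Fin (l + 1)) := by
    intro t x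
    induction t with
    | zero => simp
    | succ t ih =>
      rw [pow_succ', Equiv.Perm.mul_apply, ih, finRotate_succ_apply]
      push_cast
      ring
  -- setup
  set d : Fin (l + 1) := j - i with hd
  have hji : j = i + d := by rw [hd]; ring
  have hd0 : d ≠ 0 := sub_ne_zero.mpr (Ne.symm hij)
  have hdv0 : 0 < d.val :=
    Nat.pos_of_ne_zero (fun h => hd0 (Fin.ext (by simp [h])))
  have hdvn : d.val < l + 1 := d.isLt
  set g := Nat.gcd d.val (l + 1) with hg
  have hgdv : g ∣ d.val := Nat.gcd_dvd_left _ _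
  have hgn : g ∣ (l + 1) := Nat.gcd_dvd_right _ _
  have hg0 : 0 < g := Nat.gcd_pos_of_pos_left _ hdv0
  have hgltn : g < l + 1 := lt_of_le_of_lt (Nat.le_of_dvd hdv0 hgdv) hdvn
  set p := (l + 1) / g with hp
  have hpg : g * p = l + 1 := Nat.mul_div_cancel' hgn
  have hp2 : 2 ≤ p := by
    rcases Nat.lt_or_ge p 2 with h | h
    · interval_cases p <;> omega
    · exact h
  -- the chain
  set c : ℕ → Fin (l + 1) := fun k => i + ((m + k * d.val : ℕ) : Fin (l + 1)) with hc
  have hcsucc : ∀ k, c (k + 1) = c k + d := by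
    intro k
    have h1 : ((m + (k + 1) * d.val : ℕ) : Fin (l + 1)) =
        ((m + k * d.val : ℕ) : Fin (l + 1)) + ((d.val : ℕ) : Fin (l + 1)) := by
      push_cast; ring
    simp only [hc]
    rw [h1, Fin.cast_val_eq_self]
    ring
  -- injectivity of the chain on [0, p)
  have hcinj : ∀ k k', k < p → k' < p → c k = c k' → k = k' := by
    have main : ∀ k k', k ≤ k' → k' < p → c k = c k' → k = k' := by
      intro k k' hkk hk' he
      have he2 : ((m + k * d.val : ℕ) : Fin (l + 1)) = ((m + k' * d.val : ℕ) : Fin (l + 1)) :=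
        add_left_cancel he
      have hmod : (m + k * d.val) ≡ (m + k' * d.val) [MOD (l + 1)] :=
        (ZMod.natCast_eq_natCast_iff _ _ _).mp he2
      have hle : m + k * d.val ≤ m + k' * d.val := by
        have := mul_le_mul_left hkk d.val; omega
      have hdvd : (l + 1) ∣ (m + k' * d.val) - (m + k * d.val) :=
        (Nat.modEq_iff_dvd' hle).mp hmod
      have hsub : (m + k' * d.val) - (m + k * d.val) = (k' - k) * d.val := by
        rw [Nat.sub_mul]; omega
      rw [hsub] at hdvd
      -- p ∣ k' - k
      have hdvfac : d.val = g * (d.val / g) := (Nat.mul_div_cancel' hgdv).symm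
      have hdvd2 : g * p ∣ (k' - k) * (g * (d.val / g)) := by
        rw [hpg, ← hdvfac]; exact hdvd
      have hdvd3 : p ∣ (k' - k) * (d.val / g) := by
        have h4 : g * p ∣ g * ((k' - k) * (d.val / g)) := by
          rw [show g * ((k' - k) * (d.val / g)) = (k' - k) * (g * (d.val / g)) by ring]
          exact hdvd2
        exact (mul_dvd_mul_iff_left hg0.ne').mp h4
      have hcop : Nat.Coprime (d.val / g) p := by
        rw [hp, hg]; exact Nat.coprime_div_gcd_div_gcd hg0
      have hpk : p ∣ (k' - k) := (Nat.Coprime.dvd_of_dvd_mul_right hcop.symm) hdvd3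
      have hlt : k' - k < p := by omega
      have := Nat.eq_zero_of_dvd_of_lt hpk (by omega)
      omega
    intro k k' hk hk' he
    rcases le_total k k' with h | h
    · exact main k k' h hk' he
    · exact (main k' k h hk he.symm).symm
  -- i + t ≠ c 0 for t < m
  have hc0 : c 0 = i + (m : Fin (l + 1)) := by simp [hc]
  have hA0 : ∀ t, t < m → i + (t : Fin (l + 1)) ≠ c 0 := by
    intro t ht he
    rw [hc0] at he
    have he2 : ((t : ℕ) : Fin (l + 1)) = ((m : ℕ) : Fin (l + 1)) := add_left_cancel he
    have hmod : t ≡ m [MOD (l + 1)] := (ZMod.natCast_eq_natCast_iff _ _ _).mp he2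
    have hdvd : (l + 1) ∣ m - t := (Nat.modEq_iff_dvd' (le_of_lt ht)).mp hmod
    have := Nat.le_of_dvd (by omega) hdvd
    omega
  -- existence of an escape point
  have hex : ∃ k, (1 ≤ k ∧ ¬ ∃ t, t < m ∧ c k = i + (t : Fin (l + 1))) ∧ k ≤ p - 1 := by
    by_contra hall
    push_neg at hall
    have hall2 : ∀ k, 1 ≤ k → k ≤ p - 1 → ∃ t, t < m ∧ c k = i + (t : Fin (l + 1)) := by
      intro k h1 h2
      by_contra hno
      exact absurd (hall k ⟨h1, fun t ht he => hno ⟨t, ht, he⟩⟩) (by omega)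
    have hall3 : ∀ k, ∃ t, (1 ≤ k ∧ k ≤ p - 1) → (t < m ∧ c k = i + (t : Fin (l + 1))) := by
      intro k
      by_cases hk : 1 ≤ k ∧ k ≤ p - 1
      · obtain ⟨t, ht⟩ := hall2 k hk.1 hk.2; exact ⟨t, fun _ => ht⟩
      · exact ⟨0, fun h => absurd h hk⟩
    choose T hT using hall3
    -- each k in Icc 1 (p-1) gives a multiple of g
    have hprop : ∀ k, 1 ≤ k → k ≤ p - 1 →
        T k < m ∧ g ∣ (m - T k) ∧ 0 < m - T k := by
      intro k h1 h2
      obtain ⟨htm, hck⟩ := hT k ⟨h1, h2⟩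
      refine ⟨htm, ?_, by omega⟩
      have he2 : ((m + k * d.val : ℕ) : Fin (l + 1)) = ((T k : ℕ) : Fin (l + 1)) :=
        add_left_cancel (show i + ((m + k * d.val : ℕ) : Fin (l + 1)) =
          i + ((T k : ℕ) : Fin (l + 1)) from hck)
      have hmod : (m + k * d.val) ≡ T k [MOD (l + 1)] :=
        (ZMod.natCast_eq_natCast_iff _ _ _).mp he2
      have hdvd : (l + 1) ∣ (m + k * d.val) - T k :=
        (Nat.modEq_iff_dvd' (by omega)).mp hmod.symm
      have h5 : g ∣ (m + k * d.val) - T k := dvd_trans hgn hdvd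
      have h6 : g ∣ k * d.val := Dvd.dvd.mul_left hgdv k
      have h7 : m - T k = ((m + k * d.val) - T k) - k * d.val := by omega
      rw [h7]
      exact Nat.dvd_sub h5 h6
    have hcard : (Finset.Icc 1 (p - 1)).card ≤ (Finset.Icc 1 (m / g)).card := by
      apply Finset.card_le_card_of_injOn (fun k => (m - T k) / g)
      · intro k hk
        simp only [Finset.mem_coe, Finset.mem_Icc] at hk ⊢
        obtain ⟨htm, hdvd, hpos⟩ := hprop k hk.1 hk.2
        constructor
        · exact Nat.one_le_div_iff hg0 |>.mpr (Nat.le_of_dvd hpos hdvd)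
        · exact Nat.div_le_div_right (by omega)
      · intro k hk k' hk' heq
        simp only [Finset.coe_Icc, Set.mem_Icc] at hk hk'
        obtain ⟨htm, hdvd, hpos⟩ := hprop k hk.1 hk.2
        obtain ⟨htm', hdvd', hpos'⟩ := hprop k' hk'.1 hk'.2
        have h1 : m - T k = m - T k' := by
          have e1 : g * ((m - T k) / g) = m - T k := Nat.mul_div_cancel' hdvd
          have e2 : g * ((m - T k') / g) = m - T k' := Nat.mul_div_cancel' hdvd'
          rw [← e1, ← e2]
          simp only [] at heq
          rw [heq]
        have h2 : T k = T k' := by omega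
        have h3 : c k = c k' := by
          rw [(hT k ⟨hk.1, hk.2⟩).2, (hT k' ⟨hk'.1, hk'.2⟩).2, h2]
        exact hcinj k k' (by omega) (by omega) h3
    rw [Nat.card_Icc, Nat.card_Icc] at hcard
    -- p - 1 ≤ m / g leads to contradiction with 2m < l+1
    have h8 : p - 1 ≤ m / g := by omega
    have h9 : g * (p - 1) ≤ g * (m / g) := Nat.mul_le_mul_left g h8
    have h10 : g * (m / g) ≤ m := Nat.mul_div_le m g
    have h11 : g * p = g * (p - 1) + g := by
      have hp1 : p = (p - 1) + 1 := by omega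
      calc g * p = g * ((p - 1) + 1) := by rw [← hp1]
      _ = g * (p - 1) + g := by ring
    have h12 : 2 * g ≤ g * p := by
      calc 2 * g = g * 2 := by ring
      _ ≤ g * p := Nat.mul_le_mul_left g hp2
    omega
  -- minimal escape point
  obtain ⟨k₁, hk₁, hk₁le⟩ := hex
  have hfind : ∃ k, 1 ≤ k ∧ ¬ ∃ t, t < m ∧ c k = i + (t : Fin (l + 1)) := ⟨k₁, hk₁⟩
  set k₀ := Nat.find hfind with hk₀def
  have hk₀ : 1 ≤ k₀ ∧ ¬ ∃ t, t < m ∧ c k₀ = i + (t : Fin (l + 1)) := Nat.find_spec hfind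
  have hk₀le : k₀ ≤ p - 1 := le_trans (Nat.find_min' hfind hk₁) hk₁le
  have hk₀min : ∀ s, 1 ≤ s → s < k₀ → ∃ t, t < m ∧ c s = i + (t : Fin (l + 1)) := by
    intro s h1 h2
    have := Nat.find_min hfind h2
    push_neg at this
    exact this h1
  -- the indicator function
  set B : Fin (l + 1) → Prop := fun x => ∃ s, 1 ≤ s ∧ s ≤ k₀ ∧ x = c s with hB
  set f : Fin (l + 1) → ℝ := fun x => if B x then 1 else 0 with hf
  -- key invariance: edges inside A preserve f
  have hinv : ∀ t, t < m → f (i + (t : Fin (l + 1))) = f (i + (t : Fin (l + 1)) + d) := by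
    intro t ht
    have hiff : B (i + (t : Fin (l + 1))) ↔ B (i + (t : Fin (l + 1)) + d) := by
      constructor
      · rintro ⟨s, hs1, hsk, hx⟩
        have hsne : s ≠ k₀ := by
          intro h
          exact hk₀.2 ⟨t, ht, by rw [← h, ← hx]⟩
        exact ⟨s + 1, by omega, by omega, by rw [hx, hcsucc]⟩
      · rintro ⟨s, hs1, hsk, hx⟩
        have hs : s = (s - 1) + 1 := by omega
        have hx2 : i + (t : Fin (l + 1)) + d = c (s - 1) + d := by
          rw [hx, ← hcsucc, Nat.sub_add_cancel hs1]
        have hx3 : i + (t : Fin (l + 1)) = c (s - 1) := add_right_cancel hx2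
        have hs1ne : s - 1 ≠ 0 := by
          intro h
          rw [h] at hx3
          exact hA0 t ht hx3
        exact ⟨s - 1, by omega, by omega, hx3⟩
    simp only [hf]
    by_cases h : B (i + (t : Fin (l + 1)))
    · rw [if_pos h, if_pos (hiff.mp h)]
    · rw [if_neg h, if_neg (fun h' => h (hiff.mpr h'))]
  -- the linear functional kills the span
  have hsum : ∀ v ∈ Submodule.span ℝ
      {v | ∃ t : ℕ, t < m ∧
        v = rt (((finRotate (l + 1)) ^ t) i) (((finRotate (l + 1)) ^ t) j)},
      ∑ x, f x * v x = 0 := by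
    intro v hv
    induction hv using Submodule.span_induction with
    | mem v hvmem =>
      obtain ⟨t, ht, rfl⟩ := hvmem
      rw [hrt]
      have hsplit : ∑ x, f x *
          ((if x = ((finRotate (l + 1)) ^ t) i then (1:ℝ) else 0) -
           (if x = ((finRotate (l + 1)) ^ t) j then (1:ℝ) else 0)) =
          f (((finRotate (l + 1)) ^ t) i) - f (((finRotate (l + 1)) ^ t) j) := by
        simp [mul_sub, Finset.sum_sub_distrib, mul_ite, mul_one, mul_zero,
          Finset.sum_ite_eq', Finset.mem_univ]
      rw [hsplit, hrot t i, hrot t j, hji,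
        show i + d + (t : Fin (l + 1)) = i + (t : Fin (l + 1)) + d by ring,
        hinv t ht, sub_self]
    | zero => simp
    | add v w _ _ hv hw =>
      simp only [Pi.add_apply, mul_add, Finset.sum_add_distrib, hv, hw, add_zero]
    | smul a v _ hv =>
      simp only [Pi.smul_apply, smul_eq_mul]
      rw [show ∑ x, f x * (a * v x) = a * ∑ x, f x * v x by
        rw [Finset.mul_sum]; apply Finset.sum_congr rfl; intros; ring, hv, mul_zero]
  have htarget := hsum _ hdep
  -- compute the target value: should be -1
  have hc1 : i + (m : Fin (l + 1)) + d = c 1 := by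
    rw [← hc0, ← hcsucc 0]
  have hBc0 : ¬ B (c 0) := by
    rintro ⟨s, hs1, hsk, hx⟩
    have := hcinj 0 s (by omega) (by omega) hx
    omega
  have hBc1 : B (c 1) := ⟨1, le_refl 1, hk₀.1, rfl⟩
  rw [hrt] at htarget
  have hsplit2 : ∑ x, f x *
      ((if x = ((finRotate (l + 1)) ^ m) i then (1:ℝ) else 0) -
       (if x = ((finRotate (l + 1)) ^ m) j then (1:ℝ) else 0)) =
      f (((finRotate (l + 1)) ^ m) i) - f (((finRotate (l + 1)) ^ m) j) := by
    simp [mul_sub, Finset.sum_sub_distrib, mul_ite, mul_one, mul_zero,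
      Finset.sum_ite_eq', Finset.mem_univ]
  rw [hsplit2, hrot m i, hrot m j, hji,
    show i + d + (m : Fin (l + 1)) = i + (m : Fin (l + 1)) + d by ring,
    hc1, ← hc0] at htarget
  simp only [hf, if_neg hBc0, if_pos hBc1] at htarget
  norm_num at htarget
end
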